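/- arXiv:2510.15855 — 7 statements merged into one kernel-verified Lean document; each statement's English description precedes it below -/
import Mathlib

section
/- Let X be a nonempty compact zero-dimensional Hausdorff space, let Z = ω × X where ω carries the discrete topology, and let Z* = βZ \ Z be the Čech–Stone remainder of Z. For f ∈ H(X), let f^ω be the homeomorphism of Z defined by f^ω(n,x) = (n, f(x)); let βf^ω : βZ → βZ be its Stone extension, and let f^β be the restriction of βf^ω to Z*. Then f^β is a homeomorphism of Z*, and the map i : H(X) → H(Z*) defined by i(f) = f^β is an injective group homomorphism. -/
/-! The Stone extension is functorial, and the extension of a homeomorphism of `Z` maps `Z` onto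
itself, hence restricts to a homeomorphism of `Z*`; this gives the homomorphism. If `f` moves a
point `x`, zero-dimensionality yields a clopen `U ∋ x` with `f(U) ∩ U = ∅`. Complementary clopen
subsets of `Z` have disjoint closures in `βZ` (separate them by the Stone extension of a
`Bool`-valued indicator), so `f^β` moves every point of the trace of `ω × U` on `Z*`, which is
nonempty: it contains the cluster points of the closed discrete sequence `(n, x)`. -/

open Set Topology TopologicalSpace

/-- The compact-open topology on the group of self-homeomorphisms of a space:
the topology induced from the compact-open topology on `C(X, X)`. -/
instance homeomorphCompactOpen (X : Type*) [TopologicalSpace X] :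
    TopologicalSpace (X ≃ₜ X) :=
  TopologicalSpace.induced (fun h : X ≃ₜ X => (h : C(X, X))) ContinuousMap.compactOpen

/-- The group of self-homeomorphisms of a space, under composition. -/
instance homeomorphGroup (X : Type*) [TopologicalSpace X] : Group (X ≃ₜ X) where
  mul f g := g.trans f
  one := Homeomorph.refl X
  inv := Homeomorph.symm
  mul_assoc _ _ _ := Homeomorph.ext fun _ => rfl
  one_mul _ := Homeomorph.ext fun _ => rfl
  mul_one _ := Homeomorph.ext fun _ => rfl
  inv_mul_cancel f := Homeomorph.ext fun x => f.symm_apply_apply x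

/-- The weight of a topological space: the least cardinality of a base of its topology. -/
noncomputable def TopologicalSpace.weight (X : Type u) [TopologicalSpace X] : Cardinal.{u} :=
  ⨅ B : {B : Set (Set X) // TopologicalSpace.IsTopologicalBasis B}, Cardinal.mk B.1

/-- A set is an Fσ-set if it is a countable union of closed sets. -/
def IsFsigma {X : Type*} [TopologicalSpace X] (s : Set X) : Prop :=
  ∃ F : ℕ → Set X, (∀ n, IsClosed (F n)) ∧ s = ⋃ n, F n

/-- An F-space (for normal spaces): disjoint open Fσ-sets have disjoint closures. -/
def IsFSpace (X : Type*) [TopologicalSpace X] : Prop :=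
  ∀ U V : Set X, IsOpen U → IsOpen V → IsFsigma U → IsFsigma V → Disjoint U V →
    Disjoint (closure U) (closure V)

/-- A Parovičenko space: a compact zero-dimensional F-space of weight `𝔠` in which
every nonempty Gδ-set has infinite interior. -/
structure IsParovicenko (X : Type u) [TopologicalSpace X] : Prop where
  compact : CompactSpace X
  t2 : T2Space X
  zeroDim : TopologicalSpace.IsTopologicalBasis {s : Set X | IsClopen s}
  fSpace : IsFSpace X
  weight_eq : TopologicalSpace.weight X = Cardinal.continuum
  gdelta_int : ∀ s : Set X, IsGδ s → s.Nonempty → (interior s).Infinite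

/-- The Gδ-modification of a topology: the topology generated by the Gδ-sets. -/
def gdeltaMod {X : Type*} (t : TopologicalSpace X) : TopologicalSpace X :=
  TopologicalSpace.generateFrom {s : Set X | @IsGδ X t s}

/-- The Čech–Stone remainder `βα \ α` of a space `α`. -/
abbrev CechStoneRemainder (α : Type u) [TopologicalSpace α] : Type u :=
  {p : StoneCech α // p ∉ Set.range (stoneCechUnit : α → StoneCech α)}

/-- `ω* = βω \ ω`, the Čech–Stone remainder of the countable discrete space `ω`. -/
abbrev OmegaStar : Type := CechStoneRemainder ℕ

variable {X : Type u} [TopologicalSpace X]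

/-- `f^ω : ω × X ≃ₜ ω × X`, `(n, x) ↦ (n, f x)`. -/
def fOmega (f : X ≃ₜ X) : (ℕ × X) ≃ₜ (ℕ × X) := (Homeomorph.refl ℕ).prodCongr f

/-- The Stone extension `βf^ω : β(ω × X) → β(ω × X)` of `f^ω` (composed with the unit). -/
noncomputable def betaFOmega (f : X ≃ₜ X) : StoneCech (ℕ × X) → StoneCech (ℕ × X) :=
  stoneCechExtend (continuous_stoneCechUnit.comp (fOmega f).continuous)

/-- For `E ⊆ α`, the trace `E* = cl_{βα} E ∩ (βα \ α)` of `E` on the remainder. -/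
def starSet {α : Type u} [TopologicalSpace α] (E : Set α) : Set (StoneCech α) :=
  closure (stoneCechUnit '' E) ∩ {p | p ∉ Set.range (stoneCechUnit : α → StoneCech α)}

open Filter

namespace StoneCech

variable {α β γ : Type*} [TopologicalSpace α] [TopologicalSpace β] [TopologicalSpace γ]

noncomputable def map {f : α → β} (hf : Continuous f) : StoneCech α → StoneCech β :=
  stoneCechExtend (continuous_stoneCechUnit.comp hf)

theorem continuous_map {f : α → β} (hf : Continuous f) : Continuous (map hf) :=
  continuous_stoneCechExtend _

@[simp]
theorem map_stoneCechUnit {f : α → β} (hf : Continuous f) (x : α) :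
    map hf (stoneCechUnit x) = stoneCechUnit (f x) :=
  stoneCechExtend_stoneCechUnit _ x

theorem map_comp {f : α → β} {g : β → γ} (hf : Continuous f) (hg : Continuous g) :
    map hg ∘ map hf = map (hg.comp hf) :=
  stoneCech_hom_ext ((continuous_map hg).comp (continuous_map hf)) (continuous_map _) <|
    funext fun x => by simp

theorem map_eq_id {f : α → α} (hf : Continuous f) (h : ∀ x, f x = x) : map hf = id :=
  stoneCech_hom_ext (continuous_map hf) continuous_id <| funext fun x => by simp [h]

theorem map_mem_range_stoneCechUnit {f : α → β} (hf : Continuous f) {p : StoneCech α}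
    (hp : p ∈ range (stoneCechUnit : α → StoneCech α)) :
    map hf p ∈ range (stoneCechUnit : β → StoneCech β) := by
  obtain ⟨x, rfl⟩ := hp
  exact ⟨f x, (map_stoneCechUnit hf x).symm⟩

end StoneCech

namespace Homeomorph

variable {α β γ : Type*} [TopologicalSpace α] [TopologicalSpace β] [TopologicalSpace γ]

noncomputable def stoneCech (e : α ≃ₜ β) : StoneCech α ≃ₜ StoneCech β where
  toFun := StoneCech.map e.continuous
  invFun := StoneCech.map e.symm.continuous
  left_inv p := (congrFun (StoneCech.map_comp _ _) p).trans
    (congrFun (StoneCech.map_eq_id _ e.symm_apply_apply) p)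
  right_inv p := (congrFun (StoneCech.map_comp _ _) p).trans
    (congrFun (StoneCech.map_eq_id _ e.apply_symm_apply) p)
  continuous_toFun := StoneCech.continuous_map _
  continuous_invFun := StoneCech.continuous_map _

theorem stoneCech_trans (e : α ≃ₜ β) (e' : β ≃ₜ γ) :
    (e.trans e').stoneCech = e.stoneCech.trans e'.stoneCech :=
  Homeomorph.ext fun p => (congrFun (StoneCech.map_comp e.continuous e'.continuous) p).symm

theorem stoneCech_refl : (Homeomorph.refl α).stoneCech = Homeomorph.refl (StoneCech α) :=
  Homeomorph.ext <| congrFun <| StoneCech.map_eq_id (Homeomorph.refl α).continuous fun _ => rfl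

theorem stoneCech_mem_range_stoneCechUnit_iff (e : α ≃ₜ β) {p : StoneCech α} :
    e.stoneCech p ∈ range (stoneCechUnit : β → StoneCech β) ↔
      p ∈ range (stoneCechUnit : α → StoneCech α) :=
  ⟨fun hp => e.stoneCech.symm_apply_apply p ▸
      StoneCech.map_mem_range_stoneCechUnit e.symm.continuous hp,
    StoneCech.map_mem_range_stoneCechUnit e.continuous⟩

noncomputable def stoneCechRemainder (e : α ≃ₜ β) :
    CechStoneRemainder α ≃ₜ CechStoneRemainder β :=
  e.stoneCech.subtype fun _ => e.stoneCech_mem_range_stoneCechUnit_iff.not.symm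

noncomputable def stoneCechRemainderHom :
    (α ≃ₜ α) →* (CechStoneRemainder α ≃ₜ CechStoneRemainder α) where
  toFun := stoneCechRemainder
  map_one' := Homeomorph.ext fun p => Subtype.ext <| by
    show (Homeomorph.refl α).stoneCech p = p
    rw [stoneCech_refl]; rfl
  map_mul' f g := Homeomorph.ext fun p => Subtype.ext <| by
    show (g.trans f).stoneCech p = f.stoneCech (g.stoneCech p)
    rw [stoneCech_trans]; rfl

end Homeomorph

noncomputable def fOmegaHom (X : Type*) [TopologicalSpace X] :
    (X ≃ₜ X) →* ((ℕ × X) ≃ₜ (ℕ × X)) where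
  toFun := fOmega
  map_one' := rfl
  map_mul' _ _ := rfl

section Remainder

variable {α ι : Type*} [TopologicalSpace α]

theorem IsClopen.disjoint_closure_image_stoneCechUnit {s : Set α} (hs : IsClopen s) :
    Disjoint (closure (stoneCechUnit '' s)) (closure (stoneCechUnit '' sᶜ)) := by
  set g := stoneCechExtend ((continuous_boolIndicator_iff_isClopen s).mpr hs)
  have closure_subset : ∀ (t : Set α) (b : Bool), (∀ x ∈ t, s.boolIndicator x = b) →
      closure (stoneCechUnit '' t) ⊆ g ⁻¹' {b} := by
    intro t b ht
    refine closure_minimal ?_ ((isClosed_discrete _).preimage (continuous_stoneCechExtend _))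
    rintro _ ⟨x, hx, rfl⟩
    simp [g, stoneCechExtend_stoneCechUnit, ht x hx]
  refine .mono (closure_subset s true fun x => (s.mem_iff_boolIndicator x).mp)
    (closure_subset sᶜ false fun x => (s.notMem_iff_boolIndicator x).mp) ?_
  exact Disjoint.preimage g (by simp)

theorem MapClusterPt.notMem_range_stoneCechUnit {l : Filter ι} {u : ι → α}
    (hu : ∀ x, ∃ s, IsClopen s ∧ x ∈ s ∧ ∀ᶠ i in l, u i ∉ s) {p : StoneCech α}
    (hp : MapClusterPt p l (stoneCechUnit ∘ u)) : p ∉ range stoneCechUnit := by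
  rintro ⟨x, rfl⟩
  obtain ⟨s, hs, hxs, hus⟩ := hu x
  have hx : stoneCechUnit x ∈ closure (stoneCechUnit '' sᶜ) :=
    ClusterPt.mem_closure_of_mem hp _ (hus.mono fun i hi => ⟨u i, hi, rfl⟩)
  exact hs.disjoint_closure_image_stoneCechUnit.ne_of_mem (subset_closure ⟨x, hxs, rfl⟩) hx rfl

theorem exists_notMem_range_stoneCechUnit_mem_closure_univ_prod [TopologicalSpace ι]
    [DiscreteTopology ι] [Infinite ι] {U : Set α} (hU : U.Nonempty) :
    ∃ p : StoneCech (ι × α), p ∉ range stoneCechUnit ∧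
      p ∈ closure (stoneCechUnit '' (univ ×ˢ U)) := by
  obtain ⟨y, hy⟩ := hU
  obtain ⟨p, hp⟩ :=
    exists_clusterPt_of_compactSpace (map (fun i : ι => stoneCechUnit (i, y)) cofinite)
  refine ⟨p, MapClusterPt.notMem_range_stoneCechUnit (u := fun i => (i, y)) ?_ hp,
    ClusterPt.mem_closure_of_mem hp _ <| mem_map.2 <|
      univ_mem' fun i => ⟨(i, y), ⟨trivial, hy⟩, rfl⟩⟩
  rintro ⟨j, x⟩
  refine ⟨{j} ×ˢ univ, (isClopen_discrete _).prod isClopen_univ, ⟨rfl, trivial⟩, ?_⟩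
  filter_upwards [eventually_cofinite_ne j] with i hi using fun h => hi h.1

theorem Homeomorph.stoneCech_apply_ne_of_mapsTo_compl (e : α ≃ₜ α) {s : Set α}
    (hs : IsClopen s) (he : MapsTo e s sᶜ) {p : StoneCech α}
    (hp : p ∈ closure (stoneCechUnit '' s)) : e.stoneCech p ≠ p := by
  have hep : e.stoneCech p ∈ closure (stoneCechUnit '' sᶜ) := by
    refine closure_mono ?_ <|
      image_closure_subset_closure_image e.stoneCech.continuous ⟨p, hp, rfl⟩
    rintro _ ⟨_, ⟨x, hx, rfl⟩, rfl⟩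
    exact ⟨e x, he hx, (StoneCech.map_stoneCechUnit e.continuous x).symm⟩
  exact fun h => hs.disjoint_closure_image_stoneCechUnit.ne_of_mem hp hep h.symm

end Remainder

theorem exists_isClopen_mem_mapsTo_compl {X : Type*} [TopologicalSpace X] [T1Space X]
    (hX : IsTopologicalBasis {s : Set X | IsClopen s}) {f : X → X} (hf : Continuous f)
    {x : X} (hx : f x ≠ x) : ∃ U, IsClopen U ∧ x ∈ U ∧ MapsTo f U Uᶜ := by
  obtain ⟨V, hV, hxV, hVfx⟩ :=
    hX.exists_subset_of_mem_open (mem_compl_singleton_iff.2 hx.symm) isOpen_compl_singleton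
  exact ⟨V ∩ f ⁻¹' Vᶜ, hV.inter (hV.compl.preimage hf), ⟨hxV, fun h => hVfx h rfl⟩,
    fun u hu hfu => hu.2 hfu.1⟩

theorem exists_injective_hom_to_homeoRemainder_general (X : Type) [TopologicalSpace X] [T2Space X]
    (hzd : TopologicalSpace.IsTopologicalBasis {s : Set X | IsClopen s}) :
    ∃ i : (X ≃ₜ X) →* (CechStoneRemainder (ℕ × X) ≃ₜ CechStoneRemainder (ℕ × X)),
      Function.Injective i ∧
      ∀ (f : X ≃ₜ X) (p : CechStoneRemainder (ℕ × X)),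
        ((i f) p : StoneCech (ℕ × X)) = betaFOmega f (p : StoneCech (ℕ × X)) := by
  refine ⟨Homeomorph.stoneCechRemainderHom.comp (fOmegaHom X),
    (injective_iff_map_eq_one _).2 fun f hf => ?_, fun _ _ => rfl⟩
  by_contra hf1
  obtain ⟨x, hx⟩ : ∃ x, f x ≠ x := not_forall.1 fun h => hf1 (Homeomorph.ext h)
  obtain ⟨U, hU, hxU, hfU⟩ := exists_isClopen_mem_mapsTo_compl hzd f.continuous hx
  obtain ⟨p, hp, hpU⟩ :=
    exists_notMem_range_stoneCechUnit_mem_closure_univ_prod (ι := ℕ) ⟨x, hxU⟩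
  refine (fOmega f).stoneCech_apply_ne_of_mapsTo_compl (isClopen_univ.prod hU) ?_ hpU ?_
  · rintro ⟨n, y⟩ ⟨-, hy⟩ h
    exact hfU hy h.2
  · exact congrArg Subtype.val (DFunLike.congr_fun hf ⟨p, hp⟩)

/-- For `f ∈ H(X)`, the restriction `f^β` of the Stone extension of
`f^ω` to the remainder `Z* = β(ω × X) \ (ω × X)` is a homeomorphism of `Z*`, and
`i : H(X) → H(Z*)`, `i f = f^β`, is an injective group homomorphism. -/
theorem exists_injective_hom_to_homeoRemainder (X : Type) [TopologicalSpace X]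
    [CompactSpace X] [T2Space X] [Nonempty X]
    (hzd : TopologicalSpace.IsTopologicalBasis {s : Set X | IsClopen s}) :
    ∃ i : (X ≃ₜ X) →* (CechStoneRemainder (ℕ × X) ≃ₜ CechStoneRemainder (ℕ × X)),
      Function.Injective i ∧
      ∀ (f : X ≃ₜ X) (p : CechStoneRemainder (ℕ × X)),
        ((i f) p : StoneCech (ℕ × X)) = betaFOmega f (p : StoneCech (ℕ × X)) :=
  exists_injective_hom_to_homeoRemainder_general X hzd
end

section
/- Let X be a nonempty compact zero-dimensional Hausdorff space, Z = ω × X with ω discrete, and Z* = βZ \ Z. For a clopen set E ⊆ Z write E* = (cl_{βZ} E) ∩ Z*. Let F and G be clopen subsets of Z and let f ∈ H(X) be such that f^β(F*) ⊆ G*, where f^β is the restriction to Z* of the Stone extension of the homeomorphism f^ω(n,x) = (n, f(x)) of Z. Then the set { n < ω : f^ω(F ∩ ({n} × X)) ⊄ G ∩ ({n} × X) } is finite. -/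
open Set Topology TopologicalSpace

variable {X : Type u} [TopologicalSpace X]

section Aux
open Filter

/-- If every point of `T` has boolIndicator value `b` for a clopen set `U`, then the closure
of `stoneCechUnit '' T` is contained in the `b`-fiber of the Stone extension of the indicator. -/
lemma closure_unit_image_subset_fiber {α : Type*} [TopologicalSpace α] {U : Set α}
    (hU : IsClopen U) {T : Set α} {b : Bool} (hT : ∀ t ∈ T, U.boolIndicator t = b) :
    closure (stoneCechUnit '' T) ⊆
      stoneCechExtend ((continuous_boolIndicator_iff_isClopen U).2 hU) ⁻¹' {b} := by
  apply closure_minimal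
  · rintro _ ⟨t, ht, rfl⟩
    have := congrFun (stoneCechExtend_extends ((continuous_boolIndicator_iff_isClopen U).2 hU)) t
    simp only [Function.comp_apply] at this
    simp [this, hT t ht]
  · exact IsClosed.preimage (continuous_stoneCechExtend _) isClosed_singleton

end Aux

/-- If `F, G ⊆ ω × X` are clopen and `f ∈ H(X)` satisfies
`f^β(F*) ⊆ G*`, then `f^ω(F ∩ ({n} × X)) ⊆ G ∩ ({n} × X)` for all but finitely
many `n`. -/
theorem finite_bad_levels (X : Type) [TopologicalSpace X]
    [CompactSpace X] [T2Space X] [Nonempty X]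
    (hzd : TopologicalSpace.IsTopologicalBasis {s : Set X | IsClopen s})
    (F G : Set (ℕ × X)) (hF : IsClopen F) (hG : IsClopen G) (f : X ≃ₜ X)
    (hfβ : betaFOmega f '' starSet F ⊆ starSet G) :
    {n : ℕ | ¬ (fOmega f) '' (F ∩ {p : ℕ × X | p.1 = n}) ⊆ G ∩ {p : ℕ × X | p.1 = n}}.Finite := by
  by_contra hfin
  have hinf : {n : ℕ | ¬ (fOmega f) '' (F ∩ {p : ℕ × X | p.1 = n}) ⊆
      G ∩ {p : ℕ × X | p.1 = n}}.Infinite := hfin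
  -- choose a witness in each bad level
  have hch : ∀ n ∈ {n : ℕ | ¬ (fOmega f) '' (F ∩ {p : ℕ × X | p.1 = n}) ⊆
      G ∩ {p : ℕ × X | p.1 = n}}, ∃ x : X, (n, x) ∈ F ∧ (n, f x) ∉ G := by
    intro n hn
    simp only [Set.mem_setOf_eq, Set.not_subset] at hn
    obtain ⟨q, ⟨⟨p1, p2⟩, ⟨hpF, hp1⟩, rfl⟩, hq⟩ := hn
    simp only [Set.mem_setOf_eq] at hp1
    subst hp1
    exact ⟨p2, hpF, fun hG' => hq ⟨hG', rfl⟩⟩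
  classical
  let e := hinf.natEmbedding
  choose x hxF hxG using fun k : ℕ => hch (e k).1 (e k).2
  set g : ℕ → ℕ × X := fun k => ((e k : ℕ), x k) with hg
  have hgF : ∀ k, g k ∈ F := fun k => hxF k
  have hgG : ∀ k, fOmega f (g k) ∉ G := fun k => hxG k
  have hginj : ∀ k l, (g k).1 = (g l).1 → k = l := by
    intro k l h
    exact e.injective (Subtype.val_injective h)
  -- a cluster point of the sequence stoneCechUnit ∘ g
  set u : ℕ → StoneCech (ℕ × X) := fun k => stoneCechUnit (g k) with hu
  obtain ⟨p, hp⟩ := exists_clusterPt_of_compactSpace (Filter.map u Filter.atTop)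
  have hclos : ∀ N : ℕ, p ∈ closure (u '' Set.Ici N) := by
    intro N
    rw [mem_closure_iff_clusterPt]
    exact hp.mono (le_trans (Filter.map_mono (Filter.le_principal_iff.mpr (Filter.Ici_mem_atTop N)))
      (by rw [Filter.map_principal]))
  -- p is not in the range of stoneCechUnit
  have hpnr : p ∉ Set.range (stoneCechUnit : ℕ × X → StoneCech (ℕ × X)) := by
    rintro ⟨z, rfl⟩
    set U : Set (ℕ × X) := Prod.fst ⁻¹' {z.1} with hUdef
    have hU : IsClopen U := (isClopen_discrete {z.1}).preimage continuous_fst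
    set h := stoneCechExtend ((continuous_boolIndicator_iff_isClopen U).2 hU) with hh
    have htrue : h (stoneCechUnit z) = true := by
      have := congrFun (stoneCechExtend_extends
        ((continuous_boolIndicator_iff_isClopen U).2 hU)) z
      simp only [Function.comp_apply] at this
      rw [hh, this]
      exact (U.mem_iff_boolIndicator z).1 rfl
    -- for large k, g k avoids the fiber U
    obtain ⟨N, hN⟩ : ∃ N : ℕ, ∀ k ≥ N, (g k).1 ≠ z.1 := by
      by_cases hk : ∃ k₀ : ℕ, (g k₀).1 = z.1
      · obtain ⟨k₀, hk₀⟩ := hk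
        refine ⟨k₀ + 1, fun k hk h' => ?_⟩
        have : k = k₀ := hginj k k₀ (h'.trans hk₀.symm)
        omega
      · exact ⟨0, fun k _ h' => hk ⟨k, h'⟩⟩
    have hsub : u '' Set.Ici N ⊆ stoneCechUnit '' ((Set.univ \ U : Set (ℕ × X)) ∩
        Set.range g) := by
      rintro _ ⟨k, hk, rfl⟩
      exact ⟨g k, ⟨⟨trivial, hN k hk⟩, ⟨k, rfl⟩⟩, rfl⟩
    have hfalse : h (stoneCechUnit z) = false := by
      have := closure_unit_image_subset_fiber hU
        (T := (Set.univ \ U : Set (ℕ × X)) ∩ Set.range g) (b := false)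
        (fun t ht => (U.notMem_iff_boolIndicator t).1 ht.1.2)
        ((closure_mono hsub) (hclos N))
      exact this
    rw [htrue] at hfalse
    exact Bool.noConfusion hfalse
  -- p ∈ F*
  have hpF : p ∈ starSet F := by
    refine ⟨?_, hpnr⟩
    refine closure_mono ?_ (hclos 0)
    rintro _ ⟨k, _, rfl⟩
    exact ⟨g k, hgF k, rfl⟩
  -- q := βf p ∈ G*
  have hqG : betaFOmega f p ∈ starSet G := hfβ ⟨p, hpF, rfl⟩
  set hGind := (continuous_boolIndicator_iff_isClopen G).2 hG with hGi
  have hqtrue : stoneCechExtend hGind (betaFOmega f p) = true :=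
    closure_unit_image_subset_fiber hG (b := true)
      (fun t ht => (G.mem_iff_boolIndicator t).1 ht) hqG.1
  -- but βf p lies in the closure of unit '' (fOmega f '' range g) which avoids G
  have hmem : betaFOmega f p ∈ closure (stoneCechUnit '' (fOmega f '' Set.range g)) := by
    have h1 : p ∈ closure (stoneCechUnit '' Set.range g) := by
      refine closure_mono ?_ (hclos 0)
      rintro _ ⟨k, _, rfl⟩
      exact ⟨g k, ⟨k, rfl⟩, rfl⟩
    have h3 : betaFOmega f p ∈ closure (betaFOmega f '' (stoneCechUnit '' Set.range g)) :=
      (image_closure_subset_closure_image (continuous_stoneCechExtend _)) ⟨p, h1, rfl⟩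
    refine closure_mono ?_ h3
    rintro _ ⟨_, ⟨z, hz, rfl⟩, rfl⟩
    refine ⟨fOmega f z, ⟨z, hz, rfl⟩, ?_⟩
    have := congrFun (stoneCechExtend_extends
      (continuous_stoneCechUnit.comp (fOmega f).continuous)) z
    simpa [betaFOmega] using this.symm
  have hqfalse : stoneCechExtend hGind (betaFOmega f p) = false := by
    refine closure_unit_image_subset_fiber hG (b := false) ?_ hmem
    rintro _ ⟨z, ⟨k, rfl⟩, rfl⟩
    exact (G.notMem_iff_boolIndicator _).1 (hgG k)
  rw [hqtrue] at hqfalse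
  exact Bool.noConfusion hqfalse
end

section
/- Let X be a nonempty compact zero-dimensional Hausdorff space, Z = ω × X with ω discrete, and Z* = βZ \ Z. The injective homomorphism i : H(X) → H(Z*), i(f) = f^β (the restriction to Z* of the Stone extension of the homeomorphism f^ω(n,x) = (n, f(x)) of Z), is continuous as a map from H(X)_(δ), the Gδ-modification of H(X) with the compact-open topology, to H(Z*) with the compact-open topology. -/
open Set Topology TopologicalSpace

variable {X : Type u} [TopologicalSpace X]

/-!
`ω × X` is clopen-separated (fibrewise, `X` being compact and zero-dimensional), and then so is
`β(ω × X)`, through clopen sets `cl(S)` with `S ⊆ ω × X` clopen. So if `f^β` maps a compact `K ⊆ Z*` into an open `V`, there is a clopen `E ⊆ ω × X` with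
`f^β(K) ⊆ cl(E) ⊆ V`, and `A = (f^ω)⁻¹(E)` satisfies `K ⊆ cl(A)`. Every `g` with
`g^ω(A) ⊆ E` then has `g^β(K) ⊆ cl(E) ⊆ V`, and this condition on `g` is the countable
intersection of the compact-open conditions `g(Aₙ) ⊆ Eₙ` on the fibres: a Gδ-set of `H(X)`.
-/

def ClopenSeparated (α : Type*) [TopologicalSpace α] : Prop :=
  ∀ Z U : Set α, IsClosed Z → IsOpen U → Z ⊆ U → ∃ C, IsClopen C ∧ Z ⊆ C ∧ C ⊆ U

section StoneCech

variable {α β : Type*} [TopologicalSpace α] [TopologicalSpace β]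

theorem closure_image_preimage_stoneCechUnit {O : Set (StoneCech α)} (hO : IsClopen O) :
    closure (stoneCechUnit '' (stoneCechUnit ⁻¹' O)) = O := by
  refine (closure_minimal (image_preimage_subset _ _) hO.isClosed).antisymm ?_
  rw [image_preimage_eq_inter_range]
  exact denseRange_stoneCechUnit.open_subset_closure_inter hO.isOpen

theorem exists_isClopen_preimage_stoneCechUnit_eq {S : Set α} (hS : IsClopen S) :
    ∃ O : Set (StoneCech α), IsClopen O ∧ stoneCechUnit ⁻¹' O = S := by
  have hχ := (continuous_boolIndicator_iff_isClopen S).2 hS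
  refine ⟨stoneCechExtend hχ ⁻¹' {true},
    (isClopen_discrete _).preimage (continuous_stoneCechExtend hχ), ?_⟩
  ext a
  simp only [mem_preimage, stoneCechExtend_stoneCechUnit, mem_singleton_iff,
    ← Set.mem_iff_boolIndicator]

theorem IsClopen.closure_image_stoneCechUnit {S : Set α} (hS : IsClopen S) :
    IsClopen (closure (stoneCechUnit '' S)) := by
  obtain ⟨O, hO, rfl⟩ := exists_isClopen_preimage_stoneCechUnit_eq hS
  rwa [closure_image_preimage_stoneCechUnit hO]

theorem preimage_stoneCechUnit_closure_image {S : Set α} (hS : IsClopen S) :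
    stoneCechUnit ⁻¹' closure (stoneCechUnit '' S) = S := by
  obtain ⟨O, hO, rfl⟩ := exists_isClopen_preimage_stoneCechUnit_eq hS
  rw [closure_image_preimage_stoneCechUnit hO]

theorem ClopenSeparated.exists_clopen_closure_image (hsep : ClopenSeparated α)
    {K V : Set (StoneCech α)} (hK : IsClosed K) (hV : IsOpen V) (hKV : K ⊆ V) :
    ∃ S : Set α, IsClopen S ∧ K ⊆ closure (stoneCechUnit '' S) ∧
      closure (stoneCechUnit '' S) ⊆ V := by
  obtain ⟨W₁, hW₁, hKW₁, hW₁V⟩ := normal_exists_closure_subset hK hV hKV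
  obtain ⟨W₀, hW₀, hKW₀, hW₀W₁⟩ := normal_exists_closure_subset hK hW₁ hKW₁
  obtain ⟨S, hS, hW₀S, hSW₁⟩ := hsep _ _ (isClosed_closure.preimage continuous_stoneCechUnit)
    (hW₁.preimage continuous_stoneCechUnit) (preimage_mono hW₀W₁)
  refine ⟨S, hS, fun p hp => ?_, closure_minimal ?_ isClosed_closure |>.trans hW₁V⟩
  · have hW₀dense := denseRange_stoneCechUnit.open_subset_closure_inter hW₀ (hKW₀ hp)
    rw [← image_preimage_eq_inter_range] at hW₀dense
    exact closure_mono (image_mono ((preimage_mono subset_closure).trans hW₀S)) hW₀dense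
  · exact (image_mono hSW₁).trans ((image_preimage_subset _ _).trans subset_closure)

variable {φ : α → β} (hφ : Continuous φ)

theorem Set.MapsTo.stoneCechExtend_closure_image {A : Set α} {E : Set β} (h : MapsTo φ A E) :
    MapsTo (stoneCechExtend (continuous_stoneCechUnit.comp hφ))
      (closure (stoneCechUnit '' A)) (closure (stoneCechUnit '' E)) := by
  refine MapsTo.closure ?_ (continuous_stoneCechExtend _)
  rintro _ ⟨a, ha, rfl⟩
  rw [stoneCechExtend_stoneCechUnit]
  exact mem_image_of_mem _ (h ha)

theorem exists_mapsTo_of_mapsTo_stoneCechExtend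
    (hsep : ClopenSeparated β) {K : Set (StoneCech α)} {V : Set (StoneCech β)} (hK : IsCompact K) (hV : IsOpen V)
    (hKV : MapsTo (stoneCechExtend (continuous_stoneCechUnit.comp hφ)) K V) :
    ∃ (A : Set α) (E : Set β), IsClosed A ∧ IsOpen E ∧ MapsTo φ A E ∧
      K ⊆ closure (stoneCechUnit '' A) ∧ closure (stoneCechUnit '' E) ⊆ V := by
  set Φ := stoneCechExtend (continuous_stoneCechUnit.comp hφ)
  obtain ⟨E, hE, hΦK, hEV⟩ := hsep.exists_clopen_closure_image
    ((hK.image (continuous_stoneCechExtend _)).isClosed) hV hKV.image_subset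
  have hO : IsClopen (Φ ⁻¹' closure (stoneCechUnit '' E)) :=
    hE.closure_image_stoneCechUnit.preimage (continuous_stoneCechExtend _)
  have hunit : stoneCechUnit ⁻¹' (Φ ⁻¹' closure (stoneCechUnit '' E)) = φ ⁻¹' E := by
    rw [← preimage_comp, stoneCechExtend_extends, preimage_comp,
      preimage_stoneCechUnit_closure_image hE]
  refine ⟨φ ⁻¹' E, E, hE.isClosed.preimage hφ, hE.isOpen, mapsTo_preimage _ _, ?_, hEV⟩
  rw [← hunit, closure_image_preimage_stoneCechUnit hO]
  exact image_subset_iff.1 hΦK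

end StoneCech

theorem isClopen_prod_iff_of_discrete_left {ι X : Type*} [TopologicalSpace ι] [DiscreteTopology ι]
    [TopologicalSpace X] {S : Set (ι × X)} : IsClopen S ↔ ∀ i, IsClopen (Prod.mk i ⁻¹' S) := by
  simp_rw [← continuous_boolIndicator_iff_isClopen]
  exact continuous_prod_of_discrete_left

theorem clopenSeparated_prod {ι X : Type*} [TopologicalSpace ι] [DiscreteTopology ι]
    [TopologicalSpace X] [CompactSpace X] [T2Space X] [TotallyDisconnectedSpace X] :
    ClopenSeparated (ι × X) := by
  intro Z U hZ hU hZU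
  choose B hB hZB hBU using fun i => exists_clopen_of_closed_subset_open
    (hZ.preimage (Continuous.prodMk_right i)) (hU.preimage (Continuous.prodMk_right i))
    (preimage_mono (f := Prod.mk i) hZU)
  exact ⟨{z | z.2 ∈ B z.1}, isClopen_prod_iff_of_discrete_left.2 hB,
    fun z hz => hZB z.1 hz, fun z hz => hBU z.1 hz⟩

theorem isOpen_gdeltaMod_of_forall {Y : Type*} {t : TopologicalSpace Y} {S : Set Y}
    (h : ∀ y ∈ S, ∃ G : Set Y, @IsGδ Y t G ∧ y ∈ G ∧ G ⊆ S) : IsOpen[gdeltaMod t] S := by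
  rw [@isOpen_iff_forall_mem_open _ (gdeltaMod t)]
  intro y hy
  obtain ⟨G, hG, hyG, hGS⟩ := h y hy
  exact ⟨G, hGS, isOpen_generateFrom_of_mem hG, hyG⟩

theorem isGδ_setOf_mapsTo_fOmega [CompactSpace X] {A E : Set (ℕ × X)} (hA : IsClosed A)
    (hE : IsOpen E) : IsGδ {g : X ≃ₜ X | MapsTo (fOmega g) A E} := by
  have hfibre : {g : X ≃ₜ X | MapsTo (fOmega g) A E} =
      ⋂ n, {g : X ≃ₜ X | MapsTo g (Prod.mk n ⁻¹' A) (Prod.mk n ⁻¹' E)} := by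
    ext g
    simp [MapsTo, fOmega]
  rw [hfibre]
  exact IsGδ.iInter_of_isOpen fun n => isOpen_induced (f := fun h : X ≃ₜ X => (h : C(X, X)))
    <| ContinuousMap.isOpen_setOfPred_mapsTo
    (hA.preimage (Continuous.prodMk_right n)).isCompact (hE.preimage (Continuous.prodMk_right n))

theorem continuous_gdeltaMod_to_homeoRemainder_general (X : Type) [TopologicalSpace X]
    [CompactSpace X] [T2Space X]
    (hzd : TopologicalSpace.IsTopologicalBasis {s : Set X | IsClopen s})
    (i : (X ≃ₜ X) → (CechStoneRemainder (ℕ × X) ≃ₜ CechStoneRemainder (ℕ × X)))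
    (hi : ∀ (f : X ≃ₜ X) (p : CechStoneRemainder (ℕ × X)),
      ((i f) p : StoneCech (ℕ × X)) = betaFOmega f (p : StoneCech (ℕ × X))) :
    Continuous[gdeltaMod (homeomorphCompactOpen X),
      homeomorphCompactOpen (CechStoneRemainder (ℕ × X))] i := by
  have : TotallySeparatedSpace X := totallySeparatedSpace_of_t0_of_basis_clopen hzd
  refine continuous_induced_rng.2 <| continuous_generateFrom_iff.2 <|
    forall_mem_image2.2 fun K hK U hU => ?_
  obtain ⟨V, hV, rfl⟩ := isOpen_induced_iff.1 hU
  refine isOpen_gdeltaMod_of_forall fun f hf => ?_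
  have hfK : MapsTo (betaFOmega f) (Subtype.val '' K) V := by
    rintro _ ⟨p, hp, rfl⟩
    rw [← hi]
    exact hf hp
  obtain ⟨A, E, hA, hE, hfAE, hKA, hEV⟩ := exists_mapsTo_of_mapsTo_stoneCechExtend
    (fOmega f).continuous clopenSeparated_prod
    (hK.image continuous_subtype_val) hV hfK
  refine ⟨{g | MapsTo (fOmega g) A E}, isGδ_setOf_mapsTo_fOmega hA hE, hfAE, fun g hg p hp => ?_⟩
  show (i g p : StoneCech (ℕ × X)) ∈ V
  rw [hi]
  exact hEV (MapsTo.stoneCechExtend_closure_image (fOmega g).continuous hg (hKA ⟨p, hp, rfl⟩))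

/-- The map `i : H(X) → H(Z*)`, `i f = f^β`, is continuous from the
Gδ-modification of `H(X)` (with the compact-open topology) to `H(Z*)` with the
compact-open topology. -/
theorem continuous_gdeltaMod_to_homeoRemainder (X : Type) [TopologicalSpace X]
    [CompactSpace X] [T2Space X] [Nonempty X]
    (hzd : TopologicalSpace.IsTopologicalBasis {s : Set X | IsClopen s})
    (i : (X ≃ₜ X) → (CechStoneRemainder (ℕ × X) ≃ₜ CechStoneRemainder (ℕ × X)))
    (hi : ∀ (f : X ≃ₜ X) (p : CechStoneRemainder (ℕ × X)),
      ((i f) p : StoneCech (ℕ × X)) = betaFOmega f (p : StoneCech (ℕ × X))) :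
    Continuous[gdeltaMod (homeomorphCompactOpen X),
      homeomorphCompactOpen (CechStoneRemainder (ℕ × X))] i :=
  continuous_gdeltaMod_to_homeoRemainder_general X hzd i hi
end

section
/- Let X be a nonempty compact zero-dimensional Hausdorff space, Z = ω × X with ω discrete, and Z* = βZ \ Z. The injective homomorphism i : H(X) → H(Z*), i(f) = f^β (the restriction to Z* of the Stone extension of the homeomorphism f^ω(n,x) = (n, f(x)) of Z), is an open map from H(X) with the compact-open topology onto its image i(H(X)) with the subspace topology inherited from H(Z*) with the compact-open topology; that is, for every open V ⊆ H(X), the set i(V) is open in i(H(X)). -/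
open Set Topology TopologicalSpace

variable {X : Type u} [TopologicalSpace X]

/-! The sets `{h | h '' A ⊆ B}` with `A, B` clopen form a subbasis of `H(X)` when `X` is compact
and zero-dimensional. For clopen `A ⊆ X` the trace `(ω × A)*` is compact open in `Z*`, and `i f`
maps `(ω × A)*` into `(ω × B)*` exactly when `f` maps `A` into `B`: if `x ∈ A` and `f x ∉ B`, the
trace `(ω × {x})*` is nonempty (it is the trace of an infinite closed discrete set) and is sent into
`(ω × Bᶜ)*`, which is disjoint from `(ω × B)*`. So every subbasic open set of `H(X)` is the
preimage under `i` of an open set of `H(Z*)`. -/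

lemma TopologicalSpace.IsTopologicalBasis.exists_isClopen_between {Y : Type*} [TopologicalSpace Y]
    (hY : IsTopologicalBasis {s : Set Y | IsClopen s}) {K U : Set Y} (hK : IsCompact K)
    (hU : IsOpen U) (hKU : K ⊆ U) : ∃ C, IsClopen C ∧ K ⊆ C ∧ C ⊆ U := by
  choose C hC hxC hCU using fun x : K => hY.exists_subset_of_mem_open (hKU x.2) hU
  obtain ⟨t, ht⟩ := hK.elim_finite_subcover C (fun x => (hC x).isOpen)
    fun x hx => mem_iUnion.2 ⟨⟨x, hx⟩, hxC _⟩
  exact ⟨⋃ x ∈ t, C x, isClopen_biUnion_finset fun x _ => hC x, ht,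
    iUnion₂_subset fun x _ => hCU x⟩

lemma ContinuousMap.compactOpen_eq_generateFrom_isClopen {Y : Type*} [TopologicalSpace Y]
    [CompactSpace X] (hY : IsTopologicalBasis {s : Set Y | IsClopen s}) :
    (compactOpen : TopologicalSpace C(X, Y)) =
      generateFrom (image2 (fun A B => {f : C(X, Y) | MapsTo f A B}) {A | IsClopen A}
        {B | IsClopen B}) := by
  refine le_antisymm (le_generateFrom <| forall_mem_image2.2 fun A hA B hB =>
    isOpen_setOfPred_mapsTo hA.isClosed.isCompact hB.isOpen) ?_
  rw [compactOpen_eq]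
  refine le_generateFrom (forall_mem_image2.2 fun K hK U hU => ?_)
  refine (@isOpen_iff_forall_mem_open _ (generateFrom _) _).2 fun f hf => ?_
  obtain ⟨C, hC, hKC, hCU⟩ :=
    hY.exists_isClopen_between (hK.image f.continuous) hU (image_subset_iff.2 hf)
  exact ⟨{g | MapsTo g (f ⁻¹' C) C}, fun g hg => hg.mono (image_subset_iff.1 hKC) hCU,
    isOpen_generateFrom_of_mem (mem_image2_of_mem (hC.preimage f.continuous) hC),
    mapsTo_preimage f C⟩

lemma isOpen_setOf_homeomorph_mapsTo {K U : Set X} (hK : IsCompact K) (hU : IsOpen U) :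
    IsOpen {h : X ≃ₜ X | MapsTo h K U} :=
  (ContinuousMap.isOpen_setOfPred_mapsTo hK hU).preimage continuous_induced_dom

section StoneCech

variable {α : Type u} [TopologicalSpace α]

lemma mapsTo_stoneCechExtend_closure {β : Type*} [TopologicalSpace β] [T2Space β]
    [CompactSpace β] {g : α → β} (hg : Continuous g) {s : Set α} {t : Set β} (ht : IsClosed t)
    (hst : MapsTo g s t) : MapsTo (stoneCechExtend hg) (closure (stoneCechUnit '' s)) t := by
  refine MapsTo.closure_left ?_ (continuous_stoneCechExtend hg) ht
  rintro _ ⟨a, ha, rfl⟩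
  simpa only [stoneCechExtend_stoneCechUnit] using hst ha

lemma isCompl_closure_image_stoneCechUnit {E : Set α} (hE : IsClopen E) :
    IsCompl (closure (stoneCechUnit '' E)) (closure (stoneCechUnit '' Eᶜ)) := by
  have hg : Continuous E.boolIndicator := (continuous_boolIndicator_iff_isClopen E).2 hE
  have hE_true : MapsTo (stoneCechExtend hg) (closure (stoneCechUnit '' E)) {true} :=
    mapsTo_stoneCechExtend_closure hg isClosed_singleton
      fun a ha => (E.mem_iff_boolIndicator a).1 ha
  have hEc_false : MapsTo (stoneCechExtend hg) (closure (stoneCechUnit '' Eᶜ)) {false} :=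
    mapsTo_stoneCechExtend_closure hg isClosed_singleton
      fun a ha => (E.notMem_iff_boolIndicator a).1 ha
  refine ⟨?_, ?_⟩
  · exact ((disjoint_singleton.2 (by decide)).preimage _).mono hE_true hEc_false
  · rw [codisjoint_iff]
    change _ ∪ _ = univ
    rw [← closure_union, ← image_union, union_compl_self, image_univ,
      denseRange_stoneCechUnit.closure_range]

lemma isClopen_closure_image_stoneCechUnit {E : Set α} (hE : IsClopen E) :
    IsClopen (closure (stoneCechUnit '' E) : Set (StoneCech α)) := by
  refine ⟨isClosed_closure, ?_⟩
  rw [(isCompl_closure_image_stoneCechUnit hE).eq_compl, isOpen_compl_iff]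
  exact isClosed_closure

lemma isOpen_image_stoneCechUnit {K : Set α} (hK : IsCompact K) (hK' : IsClopen K) :
    IsOpen (stoneCechUnit '' K : Set (StoneCech α)) := by
  simpa only [(hK.image continuous_stoneCechUnit).isClosed.closure_eq] using
    (isClopen_closure_image_stoneCechUnit hK').isOpen

/-- The trace `E*` of `E ⊆ α`, as a subset of the remainder itself. -/
def remainderStarSet (E : Set α) : Set (CechStoneRemainder α) :=
  Subtype.val ⁻¹' closure (stoneCechUnit '' E)

lemma image_val_remainderStarSet (E : Set α) :
    Subtype.val '' remainderStarSet E = starSet E := by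
  rw [remainderStarSet, image_preimage_eq_inter_range, Subtype.range_coe_subtype]
  rfl

lemma isOpen_remainderStarSet {E : Set α} (hE : IsClopen E) : IsOpen (remainderStarSet E) :=
  (isClopen_closure_image_stoneCechUnit hE).isOpen.preimage continuous_subtype_val

lemma isCompact_remainderStarSet (h : IsOpen (range (stoneCechUnit : α → StoneCech α)))
    (E : Set α) : IsCompact (remainderStarSet E) := by
  rw [Subtype.isCompact_iff, image_val_remainderStarSet]
  exact (isClosed_closure.inter h.isClosed_compl).isCompact

end StoneCech

section DiscreteProduct

variable {D Y : Type*} [TopologicalSpace D] [DiscreteTopology D] [TopologicalSpace Y]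

lemma isOpen_range_stoneCechUnit_prod [CompactSpace Y] :
    IsOpen (range (stoneCechUnit : D × Y → StoneCech (D × Y))) := by
  rw [← image_univ, ← univ_prod_univ, ← iUnion_of_singleton D, iUnion_prod_const, image_iUnion]
  exact isOpen_iUnion fun n => isOpen_image_stoneCechUnit
    (isCompact_singleton.prod isCompact_univ) ((isClopen_discrete _).prod isClopen_univ)

/-- A compact subset of `β(D × Y)` covered by the clopen closures of the slices `{n} × Y` meets
only finitely many of them. -/
lemma starSet_nonempty_of_infinite_fst_image {S : Set (D × Y)} (hS : (Prod.fst '' S).Infinite) :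
    (starSet S).Nonempty := by
  by_contra hempty
  have hcover : closure (stoneCechUnit '' S) ⊆
      ⋃ n : D, closure (stoneCechUnit '' ({n} ×ˢ (univ : Set Y))) := by
    intro p hp
    obtain ⟨⟨n, y⟩, rfl⟩ : p ∈ range stoneCechUnit := not_not.1 fun hr => hempty ⟨p, hp, hr⟩
    exact mem_iUnion.2 ⟨n, subset_closure ⟨(n, y), ⟨rfl, trivial⟩, rfl⟩⟩
  obtain ⟨t, ht⟩ := isClosed_closure.isCompact.elim_finite_subcover _
    (fun n => (isClopen_closure_image_stoneCechUnit
      ((isClopen_discrete {n}).prod isClopen_univ)).isOpen) hcover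
  obtain ⟨_, ⟨⟨m, y⟩, hs, rfl⟩, hm⟩ := hS.exists_notMem_finset t
  obtain ⟨n, hn, hslice⟩ :=
    mem_iUnion₂.1 (ht (subset_closure (mem_image_of_mem stoneCechUnit hs)))
  have hoff : stoneCechUnit (m, y) ∈ closure (stoneCechUnit '' ({n} ×ˢ (univ : Set Y))ᶜ) :=
    subset_closure ⟨(m, y), fun h => hm (h.1 ▸ hn), rfl⟩
  exact disjoint_left.1 (isCompl_closure_image_stoneCechUnit
    ((isClopen_discrete {n}).prod isClopen_univ)).disjoint hslice hoff

end DiscreteProduct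

lemma mapsTo_betaFOmega (f : X ≃ₜ X) {S T : Set (ℕ × X)} (h : MapsTo (fOmega f) S T) :
    MapsTo (betaFOmega f) (closure (stoneCechUnit '' S)) (closure (stoneCechUnit '' T)) :=
  mapsTo_stoneCechExtend_closure _ isClosed_closure
    fun _ hz => subset_closure (mem_image_of_mem _ (h hz))

lemma mapsTo_remainderStarSet_iff {A B : Set X} (hB : IsClopen B) (f : X ≃ₜ X)
    (F : CechStoneRemainder (ℕ × X) → CechStoneRemainder (ℕ × X))
    (hF : ∀ p, (F p : StoneCech (ℕ × X)) = betaFOmega f p) :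
    MapsTo F (remainderStarSet (univ ×ˢ A)) (remainderStarSet (univ ×ˢ B)) ↔ MapsTo f A B := by
  refine ⟨fun hFAB x hx => ?_, fun hf p hp => ?_⟩
  · by_contra hfx
    obtain ⟨q, hq, hq_rem⟩ := starSet_nonempty_of_infinite_fst_image (D := ℕ)
      (S := univ ×ˢ ({x} : Set X))
      (by rw [fst_image_prod _ (singleton_nonempty x)]; exact infinite_univ)
    have hB_in : (F ⟨q, hq_rem⟩ : StoneCech (ℕ × X)) ∈
        closure (stoneCechUnit '' (univ ×ˢ B)) :=
      hFAB (closure_mono (image_mono (prod_mono subset_rfl (singleton_subset_iff.2 hx))) hq)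
    have hB_out : (F ⟨q, hq_rem⟩ : StoneCech (ℕ × X)) ∈
        closure (stoneCechUnit '' (univ ×ˢ B)ᶜ) := by
      rw [hF]
      exact mapsTo_betaFOmega f (S := univ ×ˢ {x}) (T := (univ ×ˢ B)ᶜ)
        (fun z hz hzB => hfx (hz.2 ▸ hzB.2)) hq
    exact disjoint_left.1 (isCompl_closure_image_stoneCechUnit (isClopen_univ.prod hB)).disjoint
      hB_in hB_out
  · rw [remainderStarSet, mem_preimage, hF]
    exact mapsTo_betaFOmega f (S := univ ×ˢ A) (T := univ ×ˢ B)
      (fun z hz => ⟨trivial, hf hz.2⟩) hp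

theorem isOpenMap_onto_image_homeoRemainder_general (X : Type) [TopologicalSpace X]
    [CompactSpace X]
    (hzd : TopologicalSpace.IsTopologicalBasis {s : Set X | IsClopen s})
    (i : (X ≃ₜ X) → (CechStoneRemainder (ℕ × X) ≃ₜ CechStoneRemainder (ℕ × X)))
    (hi : ∀ (f : X ≃ₜ X) (p : CechStoneRemainder (ℕ × X)),
      ((i f) p : StoneCech (ℕ × X)) = betaFOmega f (p : StoneCech (ℕ × X))) :
    ∀ V : Set (X ≃ₜ X), IsOpen V →
      ∃ W : Set (CechStoneRemainder (ℕ × X) ≃ₜ CechStoneRemainder (ℕ × X)),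
        IsOpen W ∧ i '' V = W ∩ Set.range i := by
  have hle : induced i inferInstance ≤ homeomorphCompactOpen X := by
    show _ ≤ induced (fun h : X ≃ₜ X => (h : C(X, X))) ContinuousMap.compactOpen
    rw [ContinuousMap.compactOpen_eq_generateFrom_isClopen hzd, induced_generateFrom_eq]
    refine le_generateFrom ?_
    rintro _ ⟨_, ⟨A, hA, B, hB, rfl⟩, rfl⟩
    refine isOpen_induced_iff.2 ⟨{H | MapsTo H (remainderStarSet (univ ×ˢ A))
      (remainderStarSet (univ ×ˢ B))}, ?_, ?_⟩
    · exact isOpen_setOf_homeomorph_mapsTo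
        (isCompact_remainderStarSet (isOpen_range_stoneCechUnit_prod (D := ℕ) (Y := X)) _)
        (isOpen_remainderStarSet (isClopen_univ.prod hB))
    · ext f
      exact mapsTo_remainderStarSet_iff hB f (i f) (hi f)
  intro V hV
  obtain ⟨W, hW, rfl⟩ := isOpen_induced_iff.1 (TopologicalSpace.le_def.1 hle V hV)
  exact ⟨W, hW, image_preimage_eq_inter_range⟩

/-- The map `i : H(X) → H(Z*)`, `i f = f^β`, is an open map from `H(X)`
with the compact-open topology onto its image in `H(Z*)` with the compact-open topology. -/
theorem isOpenMap_onto_image_homeoRemainder (X : Type) [TopologicalSpace X]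
    [CompactSpace X] [T2Space X] [Nonempty X]
    (hzd : TopologicalSpace.IsTopologicalBasis {s : Set X | IsClopen s})
    (i : (X ≃ₜ X) → (CechStoneRemainder (ℕ × X) ≃ₜ CechStoneRemainder (ℕ × X)))
    (hi : ∀ (f : X ≃ₜ X) (p : CechStoneRemainder (ℕ × X)),
      ((i f) p : StoneCech (ℕ × X)) = betaFOmega f (p : StoneCech (ℕ × X))) :
    ∀ V : Set (X ≃ₜ X), IsOpen V →
      ∃ W : Set (CechStoneRemainder (ℕ × X) ≃ₜ CechStoneRemainder (ℕ × X)),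
        IsOpen W ∧ i '' V = W ∩ Set.range i :=
  isOpenMap_onto_image_homeoRemainder_general X hzd i hi
end

section
/- Let X be a locally compact Hausdorff zero-dimensional space having a base 𝓑 for its topology consisting of compact clopen sets which are pairwise homeomorphic. Then for every open set U ⊆ X and every point x ∈ U, the set { g(x) : g ∈ H(X) and g restricts to the identity on X \ U } is dense in U. -/
open Set Topology TopologicalSpace

/-! Given `y ∈ U` and a neighbourhood `W` of `y`, pick basic sets `B ⊆ W ∩ U` around `y` and
`C ⊆ U \ B` around `x` (if `x ∉ B`). The homeomorphism `B ≃ₜ C` extends to an involution of `X`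
exchanging the disjoint clopen sets `B` and `C` and fixing everything else; it fixes `X \ U`
and sends `x` into `W`. -/

section SwapVia

variable {X : Type*} [TopologicalSpace X] {B C : Set X}

open Classical in
noncomputable def swapVia (e : B ≃ₜ C) (z : X) : X :=
  if h : z ∈ B then e ⟨z, h⟩ else if h : z ∈ C then e.symm ⟨z, h⟩ else z

lemma swapVia_of_mem_left (e : B ≃ₜ C) {z : X} (hz : z ∈ B) : swapVia e z = e ⟨z, hz⟩ :=
  dif_pos hz

lemma swapVia_of_mem_right (hd : Disjoint B C) (e : B ≃ₜ C) {z : X} (hz : z ∈ C) :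
    swapVia e z = e.symm ⟨z, hz⟩ := by
  rw [swapVia, dif_neg (hd.notMem_of_mem_right hz), dif_pos hz]

lemma swapVia_of_notMem (e : B ≃ₜ C) {z : X} (hzB : z ∉ B) (hzC : z ∉ C) :
    swapVia e z = z := by
  rw [swapVia, dif_neg hzB, dif_neg hzC]

lemma swapVia_involutive (hd : Disjoint B C) (e : B ≃ₜ C) :
    Function.Involutive (swapVia e) := by
  intro z
  by_cases hzB : z ∈ B
  · rw [swapVia_of_mem_left e hzB, swapVia_of_mem_right hd e (e ⟨z, hzB⟩).2]
    simp
  by_cases hzC : z ∈ C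
  · rw [swapVia_of_mem_right hd e hzC, swapVia_of_mem_left e (e.symm ⟨z, hzC⟩).2]
    simp
  rw [swapVia_of_notMem e hzB hzC, swapVia_of_notMem e hzB hzC]

lemma continuous_swapVia (hB : IsClopen B) (hC : IsClopen C) (hd : Disjoint B C)
    (e : B ≃ₜ C) : Continuous (swapVia e) := by
  have on_open {s : Set X} (hs : IsOpen s) {g : s → X} (hg : Continuous g)
      (hfg : ∀ z : s, swapVia e z = g z) {z : X} (hz : z ∈ s) : ContinuousAt (swapVia e) z :=
    (continuousOn_iff_continuous_domRestrict.2 (by convert hg using 1; exact funext hfg)).continuousAt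
      (hs.mem_nhds hz)
  refine continuous_iff_continuousAt.2 fun z => ?_
  by_cases hzB : z ∈ B
  · exact on_open hB.isOpen (continuous_subtype_val.comp e.continuous)
      (fun w => swapVia_of_mem_left e w.2) hzB
  by_cases hzC : z ∈ C
  · exact on_open hC.isOpen (continuous_subtype_val.comp e.symm.continuous)
      (fun w => swapVia_of_mem_right hd e w.2) hzC
  refine on_open (hB.union hC).compl.isOpen continuous_subtype_val (fun w => ?_)
    (by simp [hzB, hzC])
  obtain ⟨hwB, hwC⟩ := not_or.1 w.2
  exact swapVia_of_notMem e hwB hwC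

noncomputable def Homeomorph.swapVia (hB : IsClopen B) (hC : IsClopen C) (hd : Disjoint B C)
    (e : B ≃ₜ C) : X ≃ₜ X where
  toEquiv := (swapVia_involutive hd e).toPerm _
  continuous_toFun := continuous_swapVia hB hC hd e
  continuous_invFun := continuous_swapVia hB hC hd e

end SwapVia

lemma exists_homeomorph_fixing_compl_apply_mem {X : Type*} [TopologicalSpace X]
    {𝓑 : Set (Set X)} (hbasis : IsTopologicalBasis 𝓑) (hclopen : ∀ B ∈ 𝓑, IsClopen B)
    (hhomeo : ∀ B ∈ 𝓑, ∀ C ∈ 𝓑, Nonempty (B ≃ₜ C)) {U : Set X} (hU : IsOpen U) {x : X}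
    (hx : x ∈ U) {B : Set X} (hB : B ∈ 𝓑) (hBU : B ⊆ U) :
    ∃ g : X ≃ₜ X, (∀ z ∉ U, g z = z) ∧ g x ∈ B := by
  by_cases hxB : x ∈ B
  · exact ⟨Homeomorph.refl X, fun _ _ => rfl, hxB⟩
  obtain ⟨C, hC, hxC, hCU⟩ :=
    hbasis.exists_subset_of_mem_open (mem_sdiff_of_mem hx hxB) (hU.sdiff (hclopen B hB).isClosed)
  have hd : Disjoint B C := disjoint_right.2 fun _ hz => (hCU hz).2
  obtain ⟨e⟩ := hhomeo B hB C hC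
  refine ⟨Homeomorph.swapVia (hclopen B hB) (hclopen C hC) hd e, fun z hz => ?_, ?_⟩
  · exact swapVia_of_notMem e (fun h => hz (hBU h)) (fun h => hz (hCU h).1)
  · show swapVia e x ∈ B
    rw [swapVia_of_mem_right hd e hxC]
    exact (e.symm ⟨x, hxC⟩).2

theorem dense_orbit_of_clopen_base_general (X : Type*) [TopologicalSpace X] (𝓑 : Set (Set X))
    (hbasis : TopologicalSpace.IsTopologicalBasis 𝓑)
    (hclopen : ∀ B ∈ 𝓑, IsClopen B)
    (hhomeo : ∀ B ∈ 𝓑, ∀ C ∈ 𝓑, Nonempty (↥B ≃ₜ ↥C))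
    (U : Set X) (hU : IsOpen U) (x : X) (hx : x ∈ U) :
    U ⊆ closure {y : X | ∃ g : X ≃ₜ X, (∀ z ∉ U, g z = z) ∧ g x = y} := by
  intro y hyU
  refine mem_closure_iff.2 fun W hW hyW => ?_
  obtain ⟨B, hB, -, hBWU⟩ := hbasis.exists_subset_of_mem_open (mem_inter hyW hyU) (hW.inter hU)
  obtain ⟨g, hgU, hgB⟩ := exists_homeomorph_fixing_compl_apply_mem hbasis hclopen hhomeo hU hx hB
    (hBWU.trans inter_subset_right)
  exact ⟨g x, (hBWU hgB).1, g, hgU, rfl⟩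

/-- **Rubin's condition.** If `X` is locally compact Hausdorff and
zero-dimensional with a base of pairwise homeomorphic compact clopen sets, then for every
open `U ⊆ X` and `x ∈ U`, the set of images of `x` under homeomorphisms of `X` fixing
`X \ U` pointwise is dense in `U`. -/
theorem dense_orbit_of_clopen_base (X : Type*) [TopologicalSpace X] [T2Space X]
    [LocallyCompactSpace X] (𝓑 : Set (Set X))
    (hbasis : TopologicalSpace.IsTopologicalBasis 𝓑)
    (hcompact : ∀ B ∈ 𝓑, IsCompact B) (hclopen : ∀ B ∈ 𝓑, IsClopen B)
    (hhomeo : ∀ B ∈ 𝓑, ∀ C ∈ 𝓑, Nonempty (↥B ≃ₜ ↥C))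
    (U : Set X) (hU : IsOpen U) (x : X) (hx : x ∈ U) :
    U ⊆ closure {y : X | ∃ g : X ≃ₜ X, (∀ z ∉ U, g z = z) ∧ g x = y} :=
  dense_orbit_of_clopen_base_general X 𝓑 hbasis hclopen hhomeo U hU x hx
end

section
/- Let B be a clopen subset of ω* = βω \ ω, and let 𝓩 be a finite partition of ω* into clopen sets such that every homeomorphism f of ω* satisfying f(Z) ⊆ Z for all Z ∈ 𝓩 also satisfies f(B) ⊆ B. Then for each Z ∈ 𝓩, either B ∩ Z = ∅ or Z ⊆ B. -/
open Set Topology TopologicalSpace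

/-!
Every clopen subset of `ω*` has the form `A* = cl A \ ω` for some `A ⊆ ω`, and `A*` is unchanged
by finite modifications of `A`. If some `Z ∈ 𝓩` met both `B` and its complement, we could write
`Z ∩ B = A*` and `Z \ B = C*` with `A`, `C` disjoint and infinite. The involution of `ω` swapping
`A` and `C` along a bijection and fixing everything else extends to `βω` and induces a
homeomorphism of `ω*` exchanging `Z ∩ B` with `Z \ B` and fixing every point outside `Z`. It maps
each member of `𝓩` into itself, yet moves points of `B` out of `B`.
-/

section StoneCech

variable {α : Type*} [TopologicalSpace α] [DiscreteTopology α]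

lemma isOpen_singleton_stoneCechUnit (a : α) : IsOpen {stoneCechUnit a} := by
  obtain ⟨W, hW, hWa⟩ := isInducing_stoneCechUnit.isOpen_iff.mp (isOpen_discrete {a})
  have hW_range : W ∩ range stoneCechUnit = {stoneCechUnit a} := by
    rw [← image_preimage_eq_inter_range, hWa, image_singleton]
  have hW_sub : W ⊆ {stoneCechUnit a} := by
    simpa only [hW_range, closure_singleton] using
      denseRange_stoneCechUnit.open_subset_closure_inter hW
  have ha : stoneCechUnit a ∈ W := (Set.ext_iff.mp hWa a).mpr rfl
  rwa [← hW_sub.antisymm (singleton_subset_iff.mpr ha)]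

lemma isOpen_range_stoneCechUnit : IsOpen (range (stoneCechUnit : α → StoneCech α)) := by
  rw [← iUnion_singleton_eq_range]
  exact isOpen_iUnion isOpen_singleton_stoneCechUnit

lemma finite_of_closure_image_stoneCechUnit_subset_range {A : Set α}
    (h : closure (stoneCechUnit '' A) ⊆ range stoneCechUnit) : A.Finite := by
  have h_discrete : IsDiscrete (range (stoneCechUnit : α → StoneCech α)) := by
    refine isDiscrete_iff_forall_mem_exists_isOpen.mpr ?_
    rintro _ ⟨a, rfl⟩
    exact ⟨_, isOpen_singleton_stoneCechUnit a, inter_eq_left.mpr (by simp)⟩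
  have := (isClosed_closure.isCompact.finite (h_discrete.mono h)).subset subset_closure
  exact this.of_finite_image injective_stoneCechUnit_of_t35Space.injOn

end StoneCech

namespace Homeomorph

variable {X Y : Type*} [TopologicalSpace X] [TopologicalSpace Y]

noncomputable def stoneCechCongr (e : X ≃ₜ Y) : StoneCech X ≃ₜ StoneCech Y where
  toFun := stoneCechExtend (continuous_stoneCechUnit.comp e.continuous)
  invFun := stoneCechExtend (continuous_stoneCechUnit.comp e.symm.continuous)
  left_inv := congrFun <| stoneCech_hom_ext
    ((continuous_stoneCechExtend _).comp (continuous_stoneCechExtend _)) continuous_id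
    (funext fun x => by simp)
  right_inv := congrFun <| stoneCech_hom_ext
    ((continuous_stoneCechExtend _).comp (continuous_stoneCechExtend _)) continuous_id
    (funext fun x => by simp)
  continuous_toFun := continuous_stoneCechExtend _
  continuous_invFun := continuous_stoneCechExtend _

@[simp]
lemma stoneCechCongr_stoneCechUnit (e : X ≃ₜ Y) (x : X) :
    e.stoneCechCongr (stoneCechUnit x) = stoneCechUnit (e x) :=
  stoneCechExtend_stoneCechUnit (continuous_stoneCechUnit.comp e.continuous) x

lemma image_stoneCechCongr_range (e : X ≃ₜ Y) :
    e.stoneCechCongr '' range stoneCechUnit = range stoneCechUnit := by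
  rw [← range_comp]
  exact (congrArg range (funext e.stoneCechCongr_stoneCechUnit)).trans
    (e.surjective.range_comp stoneCechUnit)

noncomputable def cechStoneRemainderCongr (e : X ≃ₜ Y) :
    CechStoneRemainder X ≃ₜ CechStoneRemainder Y :=
  e.stoneCechCongr.subtype fun p => by
    rw [← e.image_stoneCechCongr_range, e.stoneCechCongr.injective.mem_set_image]

end Homeomorph

namespace CechStoneRemainder

section

variable {X : Type*} [TopologicalSpace X]

/-- The set usually written `A*`. -/
def starOf (A : Set X) : Set (CechStoneRemainder X) :=
  Subtype.val ⁻¹' closure (stoneCechUnit '' A)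

lemma starOf_mono {A C : Set X} (h : A ⊆ C) : starOf A ⊆ starOf C :=
  preimage_mono (closure_mono (image_mono h))

lemma starOf_union (A C : Set X) : starOf (A ∪ C) = starOf A ∪ starOf C := by
  simp only [starOf, image_union, closure_union, preimage_union]

lemma starOf_univ : starOf (univ : Set X) = univ := by
  rw [starOf, image_univ, denseRange_stoneCechUnit.closure_range, preimage_univ]

lemma compl_starOf_subset (A : Set X) : (starOf A)ᶜ ⊆ starOf Aᶜ := by
  rw [compl_subset_iff_union, ← starOf_union, union_compl_self, starOf_univ]

lemma mapsTo_starOf {Y : Type*} [TopologicalSpace Y] (e : X ≃ₜ Y) (A : Set X) :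
    MapsTo e.cechStoneRemainderCongr (starOf A) (starOf (e '' A)) := by
  intro p hp
  have h_image : e.stoneCechCongr '' (stoneCechUnit '' A) = stoneCechUnit '' (e '' A) := by
    simp only [image_image, Homeomorph.stoneCechCongr_stoneCechUnit]
  change e.stoneCechCongr p ∈ closure (stoneCechUnit '' (e '' A))
  rw [← h_image, ← e.stoneCechCongr.image_closure]
  exact mem_image_of_mem _ hp

lemma eqOn_starOf_of_eqOn (e : X ≃ₜ X) {A : Set X} (h : EqOn e id A) :
    EqOn e.cechStoneRemainderCongr id (starOf A) := by
  have h_units : EqOn e.stoneCechCongr id (stoneCechUnit '' A) := by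
    rintro _ ⟨a, ha, rfl⟩
    rw [e.stoneCechCongr_stoneCechUnit, h ha, id_eq, id_eq]
  exact fun p hp => Subtype.ext (h_units.closure e.stoneCechCongr.continuous continuous_id hp)

end

variable {α : Type*} [TopologicalSpace α] [DiscreteTopology α]

lemma starOf_eq_empty_iff {A : Set α} : starOf A = ∅ ↔ A.Finite := by
  constructor
  · intro h
    refine finite_of_closure_image_stoneCechUnit_subset_range fun p hp => ?_
    by_contra hp_range
    exact (eq_empty_iff_forall_notMem.mp h ⟨p, hp_range⟩) hp
  · intro hA
    refine eq_empty_iff_forall_notMem.mpr fun p hp => p.2 ?_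
    rw [starOf, mem_preimage, (hA.image _).isClosed.closure_eq] at hp
    exact image_subset_range _ _ hp

lemma starOf_nonempty_iff {A : Set α} : (starOf A).Nonempty ↔ A.Infinite :=
  nonempty_iff_ne_empty.trans starOf_eq_empty_iff.not

lemma inter_finite_of_disjoint_starOf {A C : Set α} (h : Disjoint (starOf A) (starOf C)) :
    (A ∩ C).Finite :=
  starOf_eq_empty_iff.mp <| subset_empty_iff.mp fun _ hp =>
    h.le_bot ⟨starOf_mono inter_subset_left hp, starOf_mono inter_subset_right hp⟩

lemma starOf_diff_of_inter_finite {A C : Set α} (h : (A ∩ C).Finite) :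
    starOf (A \ C) = starOf A := by
  conv_rhs => rw [← sdiff_union_inter A C]
  rw [starOf_union, starOf_eq_empty_iff.mpr h, union_empty]

lemma exists_starOf_eq_of_isClopen {U : Set (CechStoneRemainder α)} (hU : IsClopen U) :
    ∃ A : Set α, starOf A = U := by
  have h_val : IsClosedMap (Subtype.val : CechStoneRemainder α → StoneCech α) :=
    isOpen_range_stoneCechUnit.isClosed_compl.isClosedEmbedding_subtypeVal.isClosedMap
  obtain ⟨W, W', hW, hW', hUW, hUW', hWW'⟩ := SeparatedNhds.of_isCompact_isCompact
    (h_val U hU.isClosed).isCompact (h_val Uᶜ hU.compl.isClosed).isCompact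
    ((disjoint_image_iff Subtype.val_injective).mpr disjoint_compl_right)
  refine ⟨stoneCechUnit ⁻¹' W, Set.ext fun p => ⟨fun hp => ?_, fun hp => ?_⟩⟩
  · by_contra hpU
    have h_disj := (hWW'.mono_left (image_preimage_subset stoneCechUnit W)).closure_left hW'
    exact disjoint_left.mp h_disj hp (hUW' ⟨p, hpU, rfl⟩)
  · rw [starOf, mem_preimage, image_preimage_eq_inter_range]
    exact denseRange_stoneCechUnit.open_subset_closure_inter hW (hUW ⟨p, hp, rfl⟩)

end CechStoneRemainder

lemma exists_perm_mapsTo_swap_of_disjoint {α : Type*} {A C : Set α} (hAC : Disjoint A C)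
    (e : A ≃ C) :
    ∃ σ : Equiv.Perm α, MapsTo σ A C ∧ MapsTo σ C A ∧ EqOn σ id (A ∪ C)ᶜ := by
  classical
  let s : α → α := fun x =>
    if hA : x ∈ A then e ⟨x, hA⟩ else if hC : x ∈ C then e.symm ⟨x, hC⟩ else x
  have s_left (x : α) (hx : x ∈ A) : s x = e ⟨x, hx⟩ := dif_pos hx
  have s_right (x : α) (hx : x ∈ C) : s x = e.symm ⟨x, hx⟩ := by
    simp [s, hx, disjoint_right.mp hAC hx]
  have s_out (x : α) (hx : x ∉ A ∪ C) : s x = x := by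
    rw [mem_union, not_or] at hx
    simp only [s, dif_neg hx.1, dif_neg hx.2]
  have s_involutive : Function.Involutive s := by
    intro x
    by_cases hA : x ∈ A
    · rw [s_left x hA, s_right _ (e _).2]
      simp
    by_cases hC : x ∈ C
    · rw [s_right x hC, s_left _ (e.symm _).2]
      simp
    rw [s_out x (by simp [hA, hC]), s_out x (by simp [hA, hC])]
  refine ⟨s_involutive.toPerm s, fun x hx => ?_, fun x hx => ?_, s_out⟩
  · simp only [Function.Involutive.coe_toPerm, s_left x hx, Subtype.coe_prop]
  · simp only [Function.Involutive.coe_toPerm, s_right x hx, Subtype.coe_prop]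

namespace CechStoneRemainder

variable {α : Type*} [TopologicalSpace α] [DiscreteTopology α] [Countable α]

theorem exists_homeomorph_swap_of_isClopen {U V : Set (CechStoneRemainder α)}
    (hU : IsClopen U) (hV : IsClopen V) (hU_ne : U.Nonempty) (hV_ne : V.Nonempty)
    (hUV : Disjoint U V) :
    ∃ f : CechStoneRemainder α ≃ₜ CechStoneRemainder α,
      MapsTo f U V ∧ MapsTo f V U ∧ EqOn f id (U ∪ V)ᶜ := by
  obtain ⟨A₀, rfl⟩ := exists_starOf_eq_of_isClopen hU
  obtain ⟨C, rfl⟩ := exists_starOf_eq_of_isClopen hV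
  -- Shrinking `A₀` by the finite set `A₀ ∩ C` does not change `A₀*` and makes `A` and `C` disjoint.
  set A := A₀ \ C
  rw [← starOf_diff_of_inter_finite (inter_finite_of_disjoint_starOf hUV)] at hU_ne ⊢
  have : Infinite A := (starOf_nonempty_iff.mp hU_ne).to_subtype
  have : Infinite C := (starOf_nonempty_iff.mp hV_ne).to_subtype
  obtain ⟨e⟩ : Nonempty (A ≃ C) := nonempty_equiv_of_countable
  obtain ⟨σ, hσA, hσC, hσ_out⟩ := exists_perm_mapsTo_swap_of_disjoint disjoint_sdiff_left e
  let σ' : α ≃ₜ α := σ.toHomeomorphOfDiscrete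
  refine ⟨σ'.cechStoneRemainderCongr, (mapsTo_starOf σ' A).mono_right ?_,
    (mapsTo_starOf σ' C).mono_right ?_, ?_⟩
  · exact starOf_mono hσA.image_subset
  · exact starOf_mono hσC.image_subset
  · rw [← starOf_union]
    exact (eqOn_starOf_of_eqOn σ' hσ_out).mono (compl_starOf_subset _)

end CechStoneRemainder

theorem partition_refines_clopen_general (B : Set OmegaStar) (hB : IsClopen B)
    (𝓩 : Set (Set OmegaStar)) (hclopen : ∀ Z ∈ 𝓩, IsClopen Z)
    (hdisj : 𝓩.PairwiseDisjoint id)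
    (hyp : ∀ f : OmegaStar ≃ₜ OmegaStar, (∀ Z ∈ 𝓩, f '' Z ⊆ Z) → f '' B ⊆ B) :
    ∀ Z ∈ 𝓩, B ∩ Z = ∅ ∨ Z ⊆ B := by
  intro Z hZ
  by_contra! h
  obtain ⟨hBZ, hZB⟩ := h
  obtain ⟨f, hf_in, hf_out, hf_fix⟩ :=
    CechStoneRemainder.exists_homeomorph_swap_of_isClopen
    ((hclopen Z hZ).inter hB) ((hclopen Z hZ).diff hB)
    (inter_comm B Z ▸ hBZ) (sdiff_nonempty.mpr hZB) disjoint_sdiff_inter.symm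
  rw [inter_union_sdiff] at hf_fix
  have hf_Z : ∀ Z' ∈ 𝓩, f '' Z' ⊆ Z' := by
    rintro Z' hZ' _ ⟨p, hp, rfl⟩
    by_cases hpZ : p ∈ Z
    · obtain rfl : Z' = Z := hdisj.elim hZ' hZ (not_disjoint_iff.mpr ⟨p, hp, hpZ⟩)
      by_cases hpB : p ∈ B
      · exact (hf_in ⟨hp, hpB⟩).1
      · exact (hf_out ⟨hp, hpB⟩).1
    · rwa [hf_fix hpZ]
  obtain ⟨p, hpB, hpZ⟩ := hBZ
  exact (hf_in ⟨hpZ, hpB⟩).2 (hyp f hf_Z ⟨p, hpB, rfl⟩)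

/-- If `B ⊆ ω*` is clopen and `𝓩` is a finite clopen partition of `ω*`
such that every homeomorphism of `ω*` mapping each member of `𝓩` into itself also maps
`B` into `B`, then each member of `𝓩` either misses `B` or is contained in `B`. -/
theorem partition_refines_clopen (B : Set OmegaStar) (hB : IsClopen B)
    (𝓩 : Set (Set OmegaStar)) (hfin : 𝓩.Finite) (hclopen : ∀ Z ∈ 𝓩, IsClopen Z)
    (hdisj : 𝓩.PairwiseDisjoint id) (hcover : ⋃₀ 𝓩 = Set.univ)
    (hyp : ∀ f : OmegaStar ≃ₜ OmegaStar, (∀ Z ∈ 𝓩, f '' Z ⊆ Z) → f '' B ⊆ B) :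
    ∀ Z ∈ 𝓩, B ∩ Z = ∅ ∨ Z ⊆ B :=
  partition_refines_clopen_general B hB 𝓩 hclopen hdisj hyp
end

section
/- The topological group H(ω*), the group of self-homeomorphisms of ω* = βω \ ω with the compact-open topology, is not a P-space: there is a Gδ-subset of H(ω*) that is not open. Equivalently, there is a countable family of open neighborhoods of the identity whose intersection is not a neighborhood of the identity. -/
open Set Topology TopologicalSpace

section
open Filter

noncomputable section HOmegaAux

/-- Non-principal ultrafilters on ℕ. -/
abbrev NPUltra : Type := {u : Ultrafilter ℕ // u ∉ Set.range (pure : ℕ → Ultrafilter ℕ)}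

namespace HOmegaAux

def toU : StoneCech ℕ → Ultrafilter ℕ :=
  stoneCechExtend (continuous_of_discreteTopology (f := (pure : ℕ → Ultrafilter ℕ)))

def toS : Ultrafilter ℕ → StoneCech ℕ := Ultrafilter.extend stoneCechUnit

lemma toU_unit (n : ℕ) : toU (stoneCechUnit n) = pure n :=
  congrFun (stoneCechExtend_extends _) n

lemma toS_pure (n : ℕ) : toS (pure n) = stoneCechUnit n :=
  congrFun (ultrafilter_extend_extends _) n

lemma continuous_toU : Continuous toU := continuous_stoneCechExtend _

lemma continuous_toS : Continuous toS := continuous_ultrafilter_extend _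

lemma toU_toS : toU ∘ toS = id := by
  apply Continuous.ext_on denseRange_pure (continuous_toU.comp continuous_toS) continuous_id
  rintro _ ⟨n, rfl⟩
  simp [Function.comp, toS_pure, toU_unit]

lemma toS_toU : toS ∘ toU = id := by
  apply stoneCech_hom_ext (continuous_toS.comp continuous_toU) continuous_id
  funext n
  simp [Function.comp, toS_pure, toU_unit]

/-- The Stone–Čech compactification of `ℕ` is homeomorphic to the space of ultrafilters. -/
def scHomeo : StoneCech ℕ ≃ₜ Ultrafilter ℕ where
  toFun := toU
  invFun := toS
  left_inv p := congrFun toS_toU p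
  right_inv u := congrFun toU_toS u
  continuous_toFun := continuous_toU
  continuous_invFun := continuous_toS

lemma scHomeo_unit (n : ℕ) : scHomeo (stoneCechUnit n) = pure n := toU_unit n

lemma mem_range_iff (p : StoneCech ℕ) :
    p ∉ Set.range (stoneCechUnit : ℕ → StoneCech ℕ) ↔
      scHomeo p ∉ Set.range (pure : ℕ → Ultrafilter ℕ) := by
  constructor
  · intro hp ⟨n, hn⟩
    exact hp ⟨n, by rw [← scHomeo_unit n] at hn; exact scHomeo.injective hn.symm ▸ rfl⟩
  · intro hp ⟨n, hn⟩
    exact hp ⟨n, by rw [← hn, scHomeo_unit]⟩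

/-- `ω*` is homeomorphic to the space of non-principal ultrafilters. -/
def psi : OmegaStar ≃ₜ NPUltra where
  toFun p := ⟨scHomeo p.1, (mem_range_iff p.1).mp p.2⟩
  invFun u := ⟨scHomeo.symm u.1, by
    have := (mem_range_iff (scHomeo.symm u.1)).mpr
    rw [scHomeo.apply_symm_apply] at this
    exact this u.2⟩
  left_inv p := Subtype.ext (scHomeo.symm_apply_apply p.1)
  right_inv u := Subtype.ext (scHomeo.apply_symm_apply u.1)
  continuous_toFun := Continuous.subtype_mk (scHomeo.continuous.comp continuous_subtype_val) _
  continuous_invFun := Continuous.subtype_mk (scHomeo.symm.continuous.comp continuous_subtype_val)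
    (fun u => by
      have := (mem_range_iff (scHomeo.symm u.1)).mpr
      rw [scHomeo.apply_symm_apply] at this
      exact this u.2)

end HOmegaAux

namespace HOmegaAux

/-- The "column" function. -/
def colf (m : ℕ) : ℕ := (Nat.unpair m).1

/-- The k-th column. -/
def Pcol (k : ℕ) : Set ℕ := {m | colf m = k}

/-- The decreasing sequence of tails. -/
def Btail (n : ℕ) : Set ℕ := {m | n ≤ colf m}

lemma Pcol_infinite (k : ℕ) : (Pcol k).Infinite := by
  refine Set.infinite_of_injective_forall_mem (f := fun j : ℕ => Nat.pair k j) ?_ ?_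
  · intro a b h
    have := congrArg (fun m => (Nat.unpair m).2) h
    simpa [Nat.unpair_pair] using this
  · intro j
    simp [Pcol, colf, Nat.unpair_pair]

lemma Pcol_subset_Btail {k n : ℕ} (h : n ≤ k) : Pcol k ⊆ Btail n := by
  intro m hm
  simp only [Pcol, mem_setOf_eq] at hm
  simp [Btail, hm, h]

/-- A nonprincipal ultrafilter concentrating on the k-th column. -/
def vcol (k : ℕ) : Ultrafilter ℕ :=
  have : NeBot (cofinite ⊓ 𝓟 (Pcol k)) := (Pcol_infinite k).cofinite_inf_principal_neBot
  Ultrafilter.of (cofinite ⊓ 𝓟 (Pcol k))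

lemma vcol_le_cofinite (k : ℕ) : (vcol k : Filter ℕ) ≤ cofinite := by
  have : NeBot (cofinite ⊓ 𝓟 (Pcol k)) := (Pcol_infinite k).cofinite_inf_principal_neBot
  exact le_trans (Ultrafilter.of_le _) inf_le_left

lemma Pcol_mem_vcol (k : ℕ) : Pcol k ∈ vcol k := by
  have : NeBot (cofinite ⊓ 𝓟 (Pcol k)) := (Pcol_infinite k).cofinite_inf_principal_neBot
  exact le_trans (Ultrafilter.of_le _) inf_le_right (mem_principal_self _)

/-- The sum ultrafilter: a non-P-point of `ω*`. -/
def xU : Ultrafilter ℕ := (Filter.hyperfilter ℕ).bind vcol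

lemma mem_xU {s : Set ℕ} : s ∈ xU ↔ {k | s ∈ vcol k} ∈ Filter.hyperfilter ℕ := Iff.rfl

lemma Btail_mem_xU (n : ℕ) : Btail n ∈ xU := by
  rw [mem_xU]
  have h1 : {k : ℕ | n ≤ k} ⊆ {k | Btail n ∈ vcol k} := fun k hk =>
    Filter.mem_of_superset (Pcol_mem_vcol k) (Pcol_subset_Btail hk)
  apply Filter.mem_of_superset _ h1
  apply Filter.hyperfilter_le_cofinite
  rw [Filter.mem_cofinite]
  apply Set.Finite.subset (Set.finite_lt_nat n)
  intro k hk
  simp only [Set.mem_compl_iff, mem_setOf_eq, not_le] at hk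
  exact hk

lemma xU_le_cofinite : (xU : Filter ℕ) ≤ cofinite := by
  intro s hs
  rw [Ultrafilter.mem_coe, mem_xU]
  have : ∀ k, s ∈ vcol k := fun k => vcol_le_cofinite k hs
  have heq : {k : ℕ | s ∈ vcol k} = Set.univ := Set.eq_univ_of_forall this
  rw [heq]
  exact Filter.univ_mem

lemma infinite_of_mem_xU {s : Set ℕ} (hs : s ∈ xU) : s.Infinite := by
  intro hfin
  have : sᶜ ∈ xU := xU_le_cofinite (by simpa using hfin)
  exact absurd hs (Ultrafilter.compl_mem_iff_notMem.mp this)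

lemma xU_not_principal : xU ∉ Set.range (pure : ℕ → Ultrafilter ℕ) := by
  rintro ⟨a, ha⟩
  have : ({a} : Set ℕ) ∈ xU := by rw [← ha]; exact Filter.singleton_mem_pure
  exact (infinite_of_mem_xU this) (Set.finite_singleton a)

/-- The key non-P-point property. -/
lemma xU_key {D : Set ℕ} (hD : D ∈ xU) : ∃ n, (D \ Btail n).Infinite := by
  rw [mem_xU] at hD
  obtain ⟨k, hk⟩ := Filter.nonempty_of_mem hD
  refine ⟨k + 1, ?_⟩
  have h1 : (D ∩ Pcol k).Infinite := by
    have : D ∩ Pcol k ∈ vcol k := Filter.inter_mem hk (Pcol_mem_vcol k)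
    intro hfin
    have h2 : (D ∩ Pcol k)ᶜ ∈ vcol k := vcol_le_cofinite k (by simpa using hfin)
    exact absurd this (Ultrafilter.compl_mem_iff_notMem.mp h2)
  apply h1.mono
  intro m ⟨hmD, hmP⟩
  refine ⟨hmD, ?_⟩
  simp only [Pcol, mem_setOf_eq] at hmP
  simp [Btail, hmP]

end HOmegaAux

namespace HOmegaAux

section Swap

open Classical in
/-- The involution of ℕ swapping `S` and `F` along `e`. -/
def swapFun {S F : Set ℕ} (e : S ≃ F) : ℕ → ℕ := fun m =>
  if h : m ∈ S then (e ⟨m, h⟩ : ℕ) else if h : m ∈ F then (e.symm ⟨m, h⟩ : ℕ) else m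

lemma swapFun_mem_S {S F : Set ℕ} (e : S ≃ F) {m : ℕ} (h : m ∈ S) :
    swapFun e m = (e ⟨m, h⟩ : ℕ) := by
  simp only [swapFun, dif_pos h]

lemma swapFun_mem_F {S F : Set ℕ} (hd : Disjoint S F) (e : S ≃ F) {m : ℕ} (hm : m ∈ F) :
    swapFun e m = (e.symm ⟨m, hm⟩ : ℕ) := by
  have hns : m ∉ S := Set.disjoint_right.mp hd hm
  simp only [swapFun, dif_neg hns, dif_pos hm]

lemma swapFun_fix {S F : Set ℕ} (e : S ≃ F) {m : ℕ} (h1 : m ∉ S) (h2 : m ∉ F) :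
    swapFun e m = m := by
  simp only [swapFun, dif_neg h1, dif_neg h2]

lemma swapFun_involutive {S F : Set ℕ} (hd : Disjoint S F) (e : S ≃ F) :
    Function.Involutive (swapFun e) := by
  intro m
  by_cases hS : m ∈ S
  · rw [swapFun_mem_S e hS, swapFun_mem_F hd e (e ⟨m, hS⟩).2]
    simp
  · by_cases hF : m ∈ F
    · rw [swapFun_mem_F hd e hF, swapFun_mem_S e (e.symm ⟨m, hF⟩).2]
      simp
    · rw [swapFun_fix e hS hF, swapFun_fix e hS hF]

/-- The permutation of ℕ swapping `S` and `F` along `e`. -/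
def swapPerm {S F : Set ℕ} (hd : Disjoint S F) (e : S ≃ F) : Equiv.Perm ℕ :=
  (swapFun_involutive hd e).toPerm

lemma swapPerm_mem_S {S F : Set ℕ} (hd : Disjoint S F) (e : S ≃ F) {m : ℕ} (h : m ∈ S) :
    swapPerm hd e m ∈ F := by
  rw [show swapPerm hd e m = swapFun e m from rfl, swapFun_mem_S e h]
  exact (e ⟨m, h⟩).2

lemma swapPerm_mem_F {S F : Set ℕ} (hd : Disjoint S F) (e : S ≃ F) {m : ℕ} (h : m ∈ F) :
    swapPerm hd e m ∈ S := by
  rw [show swapPerm hd e m = swapFun e m from rfl, swapFun_mem_F hd e h]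
  exact (e.symm ⟨m, h⟩).2

lemma swapPerm_fix {S F : Set ℕ} (hd : Disjoint S F) (e : S ≃ F) {m : ℕ}
    (h1 : m ∉ S) (h2 : m ∉ F) : swapPerm hd e m = m :=
  swapFun_fix e h1 h2

end Swap

lemma exists_equiv_of_infinite {S F : Set ℕ} (hS : S.Infinite) (hF : F.Infinite) :
    Nonempty (S ≃ F) := by
  haveI := hS.to_subtype
  haveI := hF.to_subtype
  haveI : Denumerable S := (nonempty_denumerable_iff.mpr ⟨inferInstance, inferInstance⟩).some
  haveI : Denumerable F := (nonempty_denumerable_iff.mpr ⟨inferInstance, inferInstance⟩).some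
  exact ⟨(Denumerable.eqv S).trans (Denumerable.eqv F).symm⟩

section NPHomeo

lemma continuous_ultrafilter_map (σ : ℕ → ℕ) :
    Continuous (fun u : Ultrafilter ℕ => Ultrafilter.map σ u) := by
  apply continuous_generateFrom_iff.mpr
  rintro _ ⟨s, rfl⟩
  have : (fun u : Ultrafilter ℕ => Ultrafilter.map σ u) ⁻¹' {u | s ∈ u}
      = {u | σ ⁻¹' s ∈ u} := by
    ext u
    simp [Ultrafilter.mem_map]
  rw [this]
  exact ultrafilter_isOpen_basic _

lemma map_not_principal (σ : Equiv.Perm ℕ) {u : Ultrafilter ℕ}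
    (hu : u ∉ Set.range (pure : ℕ → Ultrafilter ℕ)) :
    Ultrafilter.map σ u ∉ Set.range (pure : ℕ → Ultrafilter ℕ) := by
  rintro ⟨a, ha⟩
  have h1 : ({a} : Set ℕ) ∈ Ultrafilter.map σ u := by
    rw [← ha]; exact Filter.singleton_mem_pure
  rw [Ultrafilter.mem_map] at h1
  have h2 : (σ ⁻¹' {a}).Finite := (Set.finite_singleton a).preimage (σ.injective.injOn)
  obtain ⟨b, _, hb⟩ := Ultrafilter.eq_pure_of_finite_mem h2 h1
  exact hu ⟨b, hb.symm⟩

lemma map_map_symm (σ : Equiv.Perm ℕ) (u : Ultrafilter ℕ) :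
    Ultrafilter.map σ.symm (Ultrafilter.map σ u) = u := by
  ext s
  rw [Ultrafilter.mem_map, Ultrafilter.mem_map]
  have : σ ⁻¹' (σ.symm ⁻¹' s) = s := by
    ext m; simp
  rw [this]

/-- The self-homeomorphism of the non-principal ultrafilters induced by a permutation of ℕ. -/
def npHomeo (σ : Equiv.Perm ℕ) : NPUltra ≃ₜ NPUltra where
  toFun u := ⟨Ultrafilter.map σ u.1, map_not_principal σ u.2⟩
  invFun u := ⟨Ultrafilter.map σ.symm u.1, map_not_principal σ.symm u.2⟩
  left_inv u := Subtype.ext (map_map_symm σ u.1)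
  right_inv u := Subtype.ext (by
    have := map_map_symm σ.symm u.1
    simpa using this)
  continuous_toFun := Continuous.subtype_mk
    ((continuous_ultrafilter_map σ).comp continuous_subtype_val) _
  continuous_invFun := Continuous.subtype_mk
    ((continuous_ultrafilter_map σ.symm).comp continuous_subtype_val) _

lemma npHomeo_apply (σ : Equiv.Perm ℕ) (u : NPUltra) :
    (npHomeo σ u).1 = Ultrafilter.map σ u.1 := rfl

/-- If a permutation fixes everything outside a set not in `u`, it fixes `u`. -/
lemma map_eq_self_of_fix (σ : Equiv.Perm ℕ) {E : Set ℕ} (hfix : ∀ m, m ∉ E → σ m = m)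
    {u : Ultrafilter ℕ} (hE : E ∉ u) : Ultrafilter.map σ u = u := by
  have hEc : Eᶜ ∈ u := Ultrafilter.compl_mem_iff_notMem.mpr hE
  ext s
  rw [Ultrafilter.mem_map]
  constructor
  · intro hs
    apply Filter.mem_of_superset (Filter.inter_mem hs hEc)
    rintro m ⟨hm1, hm2⟩
    have := hfix m hm2
    rw [← this]
    exact hm1
  · intro hs
    apply Filter.mem_of_superset (Filter.inter_mem hs hEc)
    rintro m ⟨hm1, hm2⟩
    show σ m ∈ s
    rw [hfix m hm2]
    exact hm1

end NPHomeo

section Basis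

lemma isOpen_np_basic (A : Set ℕ) : IsOpen {v : NPUltra | A ∈ v.1} :=
  (ultrafilter_isOpen_basic A).preimage continuous_subtype_val

/-- Basic neighborhoods in the space of non-principal ultrafilters. -/
lemma np_basic_nhds {Z : Set NPUltra} (hZ : IsOpen Z) {u : NPUltra} (hu : u ∈ Z) :
    ∃ A ∈ u.1, ∀ v : NPUltra, A ∈ v.1 → v ∈ Z := by
  obtain ⟨O, hO, rfl⟩ := isOpen_induced_iff.mp hZ
  obtain ⟨_, ⟨A, rfl⟩, hmem, hsub⟩ :=
    ultrafilterBasis_is_basis.exists_subset_of_mem_open hu hO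
  exact ⟨A, hmem, fun v hv => hsub hv⟩

end Basis

end HOmegaAux

namespace HOmegaAux

def xNP : NPUltra := ⟨xU, xU_not_principal⟩

def VO (n : ℕ) : Set OmegaStar := ⇑psi ⁻¹' {v : NPUltra | Btail n ∈ v.1}

def Uset (n : ℕ) : Set (OmegaStar ≃ₜ OmegaStar) := {h | h (psi.symm xNP) ∈ VO n}

lemma VO_open (n : ℕ) : IsOpen (VO n) :=
  (isOpen_np_basic (Btail n)).preimage psi.continuous

lemma Uset_open (n : ℕ) : IsOpen (Uset n) := by
  have hrw : Uset n = (fun h : OmegaStar ≃ₜ OmegaStar => (h : C(OmegaStar, OmegaStar))) ⁻¹'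
      {f : C(OmegaStar, OmegaStar) | Set.MapsTo f {psi.symm xNP} (VO n)} := by
    ext h
    simp only [Uset, Set.mem_setOf_eq, Set.mem_preimage, Set.mapsTo_singleton]
    rfl
  rw [hrw]
  exact (ContinuousMap.isOpen_setOf_mapsTo isCompact_singleton (VO_open n)).preimage
    continuous_induced_dom

lemma one_mem_Uset (n : ℕ) : (1 : OmegaStar ≃ₜ OmegaStar) ∈ Uset n := by
  show (1 : OmegaStar ≃ₜ OmegaStar) (psi.symm xNP) ∈ VO n
  show psi (psi.symm xNP) ∈ {v : NPUltra | Btail n ∈ v.1}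
  rw [psi.apply_symm_apply]
  exact Btail_mem_xU n

lemma exists_good_set {K U : Set NPUltra} (hK : IsCompact K) (hU : IsOpen U) (hKU : K ⊆ U) :
    ∃ A : Set ℕ, A ∈ xU ∧
      ((∀ v : NPUltra, A ∈ v.1 → v ∈ U) ∨ (∀ w : NPUltra, w ∈ K → A ∉ w.1)) := by
  by_cases hx : xNP ∈ U
  · obtain ⟨A, hA, h⟩ := np_basic_nhds hU hx
    exact ⟨A, hA, Or.inl h⟩
  · have hxK : xNP ∉ K := fun h => hx (hKU h)
    have hKcl : IsClosed (Subtype.val '' K) := (hK.image continuous_subtype_val).isClosed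
    have hxO : xU ∈ (Subtype.val '' K)ᶜ := by
      rintro ⟨w, hwK, hw⟩
      exact hxK (by rwa [show w = xNP from Subtype.ext hw] at hwK)
    obtain ⟨_, ⟨A, rfl⟩, hmem, hsub⟩ :=
      ultrafilterBasis_is_basis.exists_subset_of_mem_open hxO hKcl.isOpen_compl
    refine ⟨A, hmem, Or.inr ?_⟩
    intro w hwK hAw
    exact hsub hAw ⟨w, hwK, rfl⟩

lemma main_notMem : (⋂ n, Uset n) ∉ 𝓝 (1 : OmegaStar ≃ₜ OmegaStar) := by
  intro hmem
  rw [mem_nhds_iff] at hmem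
  obtain ⟨t, hts, topen, h1t⟩ := hmem
  obtain ⟨W, hWopen, hWpre⟩ := isOpen_induced_iff.mp topen
  have hc1W : ((1 : OmegaStar ≃ₜ OmegaStar) : C(OmegaStar, OmegaStar)) ∈ W := by
    have h2 : (1 : OmegaStar ≃ₜ OmegaStar) ∈
        (fun h : OmegaStar ≃ₜ OmegaStar => (h : C(OmegaStar, OmegaStar))) ⁻¹' W := by
      rw [hWpre]; exact h1t
    exact h2
  obtain ⟨v, hvB, hc1v, hvW⟩ :=
    (TopologicalSpace.isTopologicalBasis_of_subbasis
      ContinuousMap.compactOpen_eq).exists_subset_of_mem_open hc1W hWopen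
  obtain ⟨T, ⟨hTfin, hTsub⟩, rfl⟩ := hvB
  haveI : Finite ↥T := hTfin.to_subtype
  have hdata : ∀ s : ↥T, ∃ K Uu : Set OmegaStar, IsCompact K ∧ IsOpen Uu ∧
      s.1 = {f : C(OmegaStar, OmegaStar) | Set.MapsTo f K Uu} := by
    intro s
    obtain ⟨K, hK, Uu, hU, heq⟩ := hTsub s.2
    exact ⟨K, Uu, hK, hU, heq.symm⟩
  choose Kf Uf hKc hUo heq using hdata
  have hKU : ∀ s : ↥T, Kf s ⊆ Uf s := by
    intro s
    have h1 : ((1 : OmegaStar ≃ₜ OmegaStar) : C(OmegaStar, OmegaStar)) ∈ s.1 :=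
      Set.mem_sInter.mp hc1v s.1 s.2
    rw [heq s] at h1
    intro y hy
    exact h1 hy
  have hA : ∀ s : ↥T, ∃ A : Set ℕ, A ∈ xU ∧
      ((∀ v : NPUltra, A ∈ v.1 → v ∈ ⇑psi.symm ⁻¹' (Uf s)) ∨
        (∀ w : NPUltra, w ∈ ⇑psi '' (Kf s) → A ∉ w.1)) := by
    intro s
    apply exists_good_set ((hKc s).image psi.continuous) ((hUo s).preimage psi.symm.continuous)
    rintro _ ⟨y, hy, rfl⟩
    show psi.symm (psi y) ∈ Uf s
    rw [psi.symm_apply_apply]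
    exact hKU s hy
  choose A hAx hAalt using hA
  have hD : (⋂ s : ↥T, A s) ∈ xU := Filter.iInter_mem.mpr hAx
  set D : Set ℕ := ⋂ s : ↥T, A s with hDdef
  have hDsub : ∀ s : ↥T, D ⊆ A s := fun s => Set.iInter_subset A s
  obtain ⟨n, hFinf⟩ := xU_key hD
  set S : Set ℕ := D ∩ Btail n with hSdef
  set F : Set ℕ := D \ Btail n with hFdef
  have hS : S ∈ xU := Filter.inter_mem hD (Btail_mem_xU n)
  have hSinf : S.Infinite := infinite_of_mem_xU hS
  have hdisj : Disjoint S F := by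
    rw [Set.disjoint_left]
    rintro m ⟨_, hm2⟩ ⟨_, hm4⟩
    exact hm4 hm2
  obtain ⟨e⟩ := exists_equiv_of_infinite hSinf hFinf
  set σ := swapPerm hdisj e with hσdef
  have hSsubD : S ⊆ D := Set.inter_subset_left
  have hFsubD : F ⊆ D := Set.diff_subset
  have hfix : ∀ m, m ∉ D → σ m = m := fun m hm =>
    swapPerm_fix hdisj e (fun h => hm (hSsubD h)) (fun h => hm (hFsubD h))
  have hDpre : D ⊆ σ ⁻¹' D := by
    intro m hm
    by_cases hmS : m ∈ S
    · exact hFsubD (swapPerm_mem_S hdisj e hmS)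
    · by_cases hmF : m ∈ F
      · exact hSsubD (swapPerm_mem_F hdisj e hmF)
      · show σ m ∈ D
        rw [swapPerm_fix hdisj e hmS hmF]
        exact hm
  set g := npHomeo σ with hgdef
  set Hh : OmegaStar ≃ₜ OmegaStar := psi.trans (g.trans psi.symm) with hHdef
  have hHmem : (Hh : C(OmegaStar, OmegaStar)) ∈ ⋂₀ T := by
    rw [Set.mem_sInter]
    intro sSet hsSet
    have h5 : sSet = {f : C(OmegaStar, OmegaStar) |
        Set.MapsTo f (Kf ⟨sSet, hsSet⟩) (Uf ⟨sSet, hsSet⟩)} := heq ⟨sSet, hsSet⟩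
    rw [h5]
    intro y hy
    set s : ↥T := ⟨sSet, hsSet⟩ with hsdef
    show Hh y ∈ Uf s
    by_cases hDy : D ∈ (psi y).1
    · have hADy : A s ∈ (psi y).1 := Filter.mem_of_superset hDy (hDsub s)
      have hAg : A s ∈ (g (psi y)).1 := by
        rw [hgdef, npHomeo_apply, Ultrafilter.mem_map]
        exact Filter.mem_of_superset hDy (hDpre.trans (Set.preimage_mono (hDsub s)))
      rcases hAalt s with hleft | hright
      · exact hleft _ hAg
      · exact absurd hADy (hright (psi y) ⟨y, hy, rfl⟩)
    · have hgy : g (psi y) = psi y := Subtype.ext (by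
        rw [hgdef, npHomeo_apply]
        exact map_eq_self_of_fix σ hfix hDy)
      have hHy : Hh y = y := by
        show psi.symm (g (psi y)) = y
        rw [hgy, psi.symm_apply_apply]
      rw [hHy]
      exact hKU s hy
  have hHin : Hh ∈ ⋂ k, Uset k := by
    have h1 : (Hh : C(OmegaStar, OmegaStar)) ∈ W := hvW hHmem
    have h2 : Hh ∈ t := by
      rw [← hWpre]
      exact h1
    exact hts h2
  have hHn : Hh ∈ Uset n := Set.mem_iInter.mp hHin n
  have hnot : Btail n ∉ (g xNP).1 := by
    rw [hgdef, npHomeo_apply]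
    have hScompl : S ⊆ (σ ⁻¹' Btail n)ᶜ := by
      intro m hm hc
      exact (swapPerm_mem_S hdisj e hm).2 hc
    have hcm : (σ ⁻¹' Btail n)ᶜ ∈ xU := Filter.mem_of_superset hS hScompl
    rw [Ultrafilter.mem_map]
    exact Ultrafilter.compl_mem_iff_notMem.mp hcm
  apply hnot
  have h4 : psi (Hh (psi.symm xNP)) ∈ {v : NPUltra | Btail n ∈ v.1} := hHn
  have h3 : psi (Hh (psi.symm xNP)) = g xNP := by
    show psi (psi.symm (g (psi (psi.symm xNP)))) = g xNP
    rw [psi.apply_symm_apply, psi.apply_symm_apply]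
  rwa [h3] at h4

end HOmegaAux


end HOmegaAux
end

/-- `H(ω*)` is not a P-space: some Gδ-subset is not open;
equivalently, some countable family of open neighborhoods of the identity has an
intersection that is not a neighborhood of the identity. -/
theorem homeoOmegaStar_not_pSpace :
    (∃ s : Set (OmegaStar ≃ₜ OmegaStar), IsGδ s ∧ ¬ IsOpen s) ∧
    ∃ U : ℕ → Set (OmegaStar ≃ₜ OmegaStar),
      (∀ n, IsOpen (U n) ∧ (1 : OmegaStar ≃ₜ OmegaStar) ∈ U n) ∧
      (⋂ n, U n) ∉ nhds (1 : OmegaStar ≃ₜ OmegaStar) := by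
  refine ⟨⟨⋂ n, HOmegaAux.Uset n,
      IsGδ.iInter (fun n => (HOmegaAux.Uset_open n).isGδ), ?_⟩,
    HOmegaAux.Uset, fun n => ⟨HOmegaAux.Uset_open n, HOmegaAux.one_mem_Uset n⟩,
    HOmegaAux.main_notMem⟩
  intro hopen
  exact HOmegaAux.main_notMem
    (hopen.mem_nhds (Set.mem_iInter.mpr HOmegaAux.one_mem_Uset))
end
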